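/- arXiv:2206.11206 — 6 statements merged into one kernel-verified Lean document; each statement's English description precedes it below -/
import Mathlib

section
/- Let X and Y be complex Banach spaces, N ≥ 1, and let Q : X → Y be a nonzero continuous N-homogeneous polynomial. Then for every ε > 0 there exists ρ > 0 such that for every s ∈ [0,1] with |s − √(N/(N+2))| > ε one has (1 − s²)‖Q‖_s < ‖Q‖_v − ρ. -/
open Filter Topology Metric

/-- The weighted ("v-") norm: `sup_{‖x‖<1} (1 - ‖x‖²)‖f x‖`. -/
noncomputable def vNorm {X Y : Type*} [NormedAddCommGroup X] [NormedAddCommGroup Y]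
    (f : X → Y) : ℝ :=
  sSup ((fun x => (1 - ‖x‖ ^ 2) * ‖f x‖) '' {x : X | ‖x‖ < 1})

/-- The `s`-norm: `sup_{‖x‖<1} ‖f (s • x)‖`. -/
noncomputable def sNorm {X Y : Type*} [NormedAddCommGroup X] [NormedSpace ℂ X]
    [NormedAddCommGroup Y] (s : ℝ) (f : X → Y) : ℝ :=
  sSup ((fun x => ‖f ((s : ℂ) • x)‖) '' {x : X | ‖x‖ < 1})

/-- The supremum norm over the open unit ball. -/
noncomputable def supNorm {X Y : Type*} [NormedAddCommGroup X] [NormedAddCommGroup Y]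
    (f : X → Y) : ℝ :=
  sSup ((fun x => ‖f x‖) '' {x : X | ‖x‖ < 1})

/-- `P` is a continuous `N`-homogeneous polynomial: `P x = A(x, …, x)` for a continuous
`N`-linear map `A`. -/
def IsHomPoly {X Y : Type*} [NormedAddCommGroup X] [NormedSpace ℂ X]
    [NormedAddCommGroup Y] [NormedSpace ℂ Y] (N : ℕ) (P : X → Y) : Prop :=
  ∃ A : ContinuousMultilinearMap ℂ (fun _ : Fin N => X) Y, ∀ x, P x = A (fun _ => x)

/-- `P` is a polynomial of degree at most `N`: a sum of continuous `k`-homogeneous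
polynomials for `k = 0, …, N`. -/
def IsPolyDeg {X Y : Type*} [NormedAddCommGroup X] [NormedSpace ℂ X]
    [NormedAddCommGroup Y] [NormedSpace ℂ Y] (N : ℕ) (P : X → Y) : Prop :=
  ∃ Pk : ℕ → X → Y, (∀ k, k ≤ N → IsHomPoly k (Pk k)) ∧
    ∀ x, P x = ∑ k ∈ Finset.range (N + 1), Pk k x

/-- `f` attains its `s`-norm. -/
def AttainsS {X Y : Type*} [NormedAddCommGroup X] [NormedSpace ℂ X]
    [NormedAddCommGroup Y] (s : ℝ) (f : X → Y) : Prop :=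
  ∃ x₀ : X, ‖x₀‖ ≤ s ∧ ‖f x₀‖ = sNorm s f

/-- `f` attains its `v`-norm. -/
def AttainsV {X Y : Type*} [NormedAddCommGroup X] [NormedAddCommGroup Y]
    (f : X → Y) : Prop :=
  ∃ x₀ : X, ‖x₀‖ ≤ 1 ∧ (1 - ‖x₀‖ ^ 2) * ‖f x₀‖ = vNorm f

/-- sSup of a scaled image. -/
lemma csSup_image_mul_aux {α : Type*} (c : ℝ) (hc : 0 ≤ c) (f : α → ℝ)
    (hf : ∀ x, 0 ≤ f x) (s : Set α) (hne : s.Nonempty)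
    (B : ℝ) (hB : ∀ x ∈ s, f x ≤ B) :
    sSup ((fun x => c * f x) '' s) = c * sSup (f '' s) := by
  have hbdd : BddAbove (f '' s) := ⟨B, by rintro y ⟨x, hx, rfl⟩; exact hB x hx⟩
  have hbdd2 : BddAbove ((fun x => c * f x) '' s) := ⟨c * B, by
    rintro y ⟨x, hx, rfl⟩
    exact mul_le_mul_of_nonneg_left (hB x hx) hc⟩
  have hsup_nonneg : 0 ≤ sSup (f '' s) := by
    obtain ⟨x, hx⟩ := hne
    exact le_trans (hf x) (le_csSup hbdd ⟨x, hx, rfl⟩)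
  apply le_antisymm
  · apply Real.sSup_le
    · rintro y ⟨x, hx, rfl⟩
      exact mul_le_mul_of_nonneg_left (le_csSup hbdd ⟨x, hx, rfl⟩) hc
    · exact mul_nonneg hc hsup_nonneg
  · rcases eq_or_lt_of_le hc with h0 | hcpos
    · subst h0
      have himg : ((fun x => (0:ℝ) * f x) '' s) = {0} := by
        rw [show (fun x => (0:ℝ) * f x) = fun _ => (0:ℝ) by funext x; ring,
          Set.Nonempty.image_const hne]
      rw [himg]; simp
    · rw [mul_comm, ← le_div_iff₀ hcpos]
      apply csSup_le (hne.image _)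
      rintro y ⟨x, hx, rfl⟩
      rw [le_div_iff₀ hcpos, mul_comm]
      exact le_csSup hbdd2 ⟨x, hx, rfl⟩

/-- The profile function `s ↦ s^N (1 - s²)`. -/
noncomputable def gf (N : ℕ) (s : ℝ) : ℝ := s ^ N * (1 - s ^ 2)

lemma gf_hasDerivAt (N : ℕ) (s : ℝ) :
    HasDerivAt (gf N) ((N : ℝ) * s ^ (N - 1) * (1 - s ^ 2) + s ^ N * (-(2 * s))) s := by
  have h1 := hasDerivAt_pow N s
  have h2 : HasDerivAt (fun s : ℝ => 1 - s ^ 2) (-(2 * s)) s := by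
    have := (hasDerivAt_pow 2 s).const_sub 1
    simpa using this
  exact h1.mul h2

lemma gf_cont (N : ℕ) : Continuous (gf N) := by
  unfold gf; fun_prop

lemma st_sq (N : ℕ) : (Real.sqrt ((N : ℝ) / (N + 2))) ^ 2 = (N : ℝ) / (N + 2) :=
  Real.sq_sqrt (by positivity)

lemma st_pos (N : ℕ) (hN : 1 ≤ N) : 0 < Real.sqrt ((N : ℝ) / (N + 2)) := by
  apply Real.sqrt_pos.mpr
  have : (1:ℝ) ≤ N := by exact_mod_cast hN
  positivity

lemma st_lt_one (N : ℕ) : Real.sqrt ((N : ℝ) / (N + 2)) < 1 := by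
  have h2 : ((N : ℝ)) / (N + 2) < 1 := by
    rw [div_lt_one (by positivity)]; linarith
  nlinarith [st_sq N, Real.sqrt_nonneg ((N : ℝ) / (N + 2))]

lemma gf_strictMonoOn (N : ℕ) (hN : 1 ≤ N) :
    StrictMonoOn (gf N) (Set.Icc 0 (Real.sqrt ((N : ℝ) / (N + 2)))) := by
  set st := Real.sqrt ((N : ℝ) / (N + 2)) with hst
  apply strictMonoOn_of_deriv_pos (convex_Icc 0 st) (gf_cont N).continuousOn
  intro x hx
  rw [interior_Icc] at hx
  rw [(gf_hasDerivAt N x).deriv]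
  have hx0 : 0 < x := hx.1
  have hxN : (0:ℝ) < x ^ (N - 1) := pow_pos hx0 _
  have hx2 : x ^ 2 < (N : ℝ) / (N + 2) := by
    have := pow_lt_pow_left₀ hx.2 hx0.le two_ne_zero
    rwa [st_sq N] at this
  have h2 : 0 < (N : ℝ) - ((N : ℝ) + 2) * x ^ 2 := by
    rw [lt_div_iff₀ (by positivity)] at hx2
    linarith
  have hpow : x ^ N = x ^ (N - 1) * x := by
    rw [← pow_succ]; congr 1; omega
  nlinarith [mul_pos hxN h2]

lemma gf_strictAntiOn (N : ℕ) (hN : 1 ≤ N) :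
    StrictAntiOn (gf N) (Set.Icc (Real.sqrt ((N : ℝ) / (N + 2))) 1) := by
  set st := Real.sqrt ((N : ℝ) / (N + 2)) with hst
  apply strictAntiOn_of_deriv_neg (convex_Icc st 1) (gf_cont N).continuousOn
  intro x hx
  rw [interior_Icc] at hx
  rw [(gf_hasDerivAt N x).deriv]
  have hx0 : 0 < x := lt_of_le_of_lt (Real.sqrt_nonneg _) hx.1
  have hxN : (0:ℝ) < x ^ (N - 1) := pow_pos hx0 _
  have hx2 : (N : ℝ) / (N + 2) < x ^ 2 := by
    have := pow_lt_pow_left₀ hx.1 (Real.sqrt_nonneg _) two_ne_zero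
    rwa [st_sq N] at this
  have h2 : (N : ℝ) - ((N : ℝ) + 2) * x ^ 2 < 0 := by
    rw [div_lt_iff₀ (by positivity)] at hx2
    linarith
  have hpow : x ^ N = x ^ (N - 1) * x := by
    rw [← pow_succ]; congr 1; omega
  nlinarith [mul_pos hxN (neg_pos.mpr h2)]

lemma gf_le_max (N : ℕ) (hN : 1 ≤ N) {s : ℝ} (h0 : 0 ≤ s) (h1 : s ≤ 1) :
    gf N s ≤ gf N (Real.sqrt ((N : ℝ) / (N + 2))) := by
  set st := Real.sqrt ((N : ℝ) / (N + 2)) with hst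
  rcases le_or_gt s st with h | h
  · exact (gf_strictMonoOn N hN).monotoneOn ⟨h0, h⟩ ⟨st_pos N hN |>.le, le_refl st⟩ h
  · exact ((gf_strictAntiOn N hN).antitoneOn ⟨le_refl st, (st_lt_one N).le⟩ ⟨h.le, h1⟩ h.le)

lemma gf_lt_max (N : ℕ) (hN : 1 ≤ N) {s : ℝ} (h0 : 0 ≤ s) (h1 : s ≤ 1)
    (hne : s ≠ Real.sqrt ((N : ℝ) / (N + 2))) :
    gf N s < gf N (Real.sqrt ((N : ℝ) / (N + 2))) := by
  set st := Real.sqrt ((N : ℝ) / (N + 2)) with hst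
  rcases lt_or_gt_of_ne hne with h | h
  · exact (gf_strictMonoOn N hN) ⟨h0, h.le⟩ ⟨(st_pos N hN).le, le_refl st⟩ h
  · exact (gf_strictAntiOn N hN) ⟨le_refl st, (st_lt_one N).le⟩ ⟨h.le, h1⟩ h

lemma gf_max_pos (N : ℕ) (hN : 1 ≤ N) : 0 < gf N (Real.sqrt ((N : ℝ) / (N + 2))) := by
  have h1 := st_pos N hN
  have h2 := st_lt_one N
  unfold gf
  have : 0 < 1 - (Real.sqrt ((N : ℝ) / (N + 2))) ^ 2 := by nlinarith
  positivity

/-- for a nonzero continuous `N`-homogeneous polynomial `Q` and every `ε > 0`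
there is `ρ > 0` with `(1-s²)‖Q‖_s < ‖Q‖_v - ρ` whenever `s ∈ [0,1]` and
`|s - √(N/(N+2))| > ε`. -/

theorem stmt11 {X Y : Type*} [NormedAddCommGroup X] [NormedSpace ℂ X] [CompleteSpace X]
    [NormedAddCommGroup Y] [NormedSpace ℂ Y] [CompleteSpace Y]
    (N : ℕ) (hN : 1 ≤ N) (Q : X → Y) (hQ : IsHomPoly N Q) (hQ0 : ∃ x, Q x ≠ 0)
    (ε : ℝ) (hε : 0 < ε) :
    ∃ ρ : ℝ, 0 < ρ ∧ ∀ s : ℝ, 0 ≤ s → s ≤ 1 →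
      ε < |s - Real.sqrt ((N : ℝ) / (N + 2))| →
      (1 - s ^ 2) * sNorm s Q < vNorm Q - ρ := by
  obtain ⟨A, hA⟩ := hQ
  set st := Real.sqrt ((N : ℝ) / (N + 2)) with hst
  set ball1 : Set X := {x : X | ‖x‖ < 1} with hball1
  have hball_ne : ball1.Nonempty := ⟨0, by simp [hball1]⟩
  -- homogeneity
  have hom : ∀ (c : ℂ) (x : X), Q (c • x) = c ^ N • Q x := by
    intro c x
    rw [hA, hA]
    have := A.map_smul_univ (fun _ => c) (fun _ => x)
    simpa using this
  have hQnorm_smul : ∀ (s : ℝ), 0 ≤ s → ∀ x : X, ‖Q ((s : ℂ) • x)‖ = s ^ N * ‖Q x‖ := by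
    intro s hs x
    rw [hom, norm_smul, norm_pow, Complex.norm_real, Real.norm_eq_abs, abs_of_nonneg hs]
  have hQle : ∀ x : X, ‖Q x‖ ≤ ‖A‖ * ‖x‖ ^ N := by
    intro x
    rw [hA]
    calc ‖A fun _ => x‖ ≤ ‖A‖ * ∏ _i : Fin N, ‖x‖ := A.le_opNorm _
    _ = ‖A‖ * ‖x‖ ^ N := by simp
  have hB : ∀ x ∈ ball1, ‖Q x‖ ≤ ‖A‖ := by
    intro x hx
    calc ‖Q x‖ ≤ ‖A‖ * ‖x‖ ^ N := hQle x
    _ ≤ ‖A‖ * 1 := by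
        apply mul_le_mul_of_nonneg_left _ (norm_nonneg A)
        exact pow_le_one₀ (norm_nonneg x) (le_of_lt hx)
    _ = ‖A‖ := mul_one _
  set M := supNorm Q with hM_def
  have hMbdd : BddAbove ((fun x => ‖Q x‖) '' ball1) :=
    ⟨‖A‖, by rintro y ⟨x, hx, rfl⟩; exact hB x hx⟩
  have hM_nonneg : 0 ≤ M := by
    have : (0:ℝ) ≤ ‖Q 0‖ := norm_nonneg _
    exact le_trans this (le_csSup hMbdd ⟨0, by simp [hball1], rfl⟩)
  -- M positive
  have hM_pos : 0 < M := by
    obtain ⟨x, hx⟩ := hQ0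
    have hxne : x ≠ 0 := by
      rintro rfl
      apply hx
      have h0 : Q ((0:ℂ) • (0:X)) = (0:ℂ) ^ N • Q 0 := hom 0 0
      rw [smul_zero] at h0
      rw [h0, zero_pow (by omega), zero_smul]
    have hxnorm : 0 < ‖x‖ := norm_pos_iff.mpr hxne
    set t : ℝ := (2 * ‖x‖)⁻¹ with ht
    have ht0 : 0 < t := by positivity
    set y : X := (t : ℂ) • x with hy
    have hynorm : ‖y‖ = 1/2 := by
      rw [hy, norm_smul, Complex.norm_real, Real.norm_eq_abs, abs_of_nonneg ht0.le, ht]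
      field_simp
    have hyball : y ∈ ball1 := by rw [hball1]; simp [hynorm]; norm_num
    have hQy : 0 < ‖Q y‖ := by
      rw [hy, hom]
      apply norm_pos_iff.mpr
      apply smul_ne_zero _ hx
      exact pow_ne_zero _ (by exact_mod_cast ht0.ne')
    exact lt_of_lt_of_le hQy (le_csSup hMbdd ⟨y, hyball, rfl⟩)
  -- pointwise bound via M
  have qbound : ∀ x : X, ‖x‖ < 1 → ‖Q x‖ ≤ M * ‖x‖ ^ N := by
    intro x hx
    have key : ∀ r : ℝ, ‖x‖ < r → r < 1 → ‖Q x‖ ≤ M * r ^ N := by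
      intro r h1 h2
      have hr : 0 < r := lt_of_le_of_lt (norm_nonneg x) h1
      have hrC : (r : ℂ) ≠ 0 := by exact_mod_cast hr.ne'
      have hxr : x = (r : ℂ) • ((r : ℂ)⁻¹ • x) := (smul_inv_smul₀ hrC x).symm
      have hz : ‖(r : ℂ)⁻¹ • x‖ < 1 := by
        rw [norm_smul, norm_inv, Complex.norm_real, Real.norm_eq_abs, abs_of_nonneg hr.le]
        rw [inv_mul_lt_iff₀ hr, mul_one]
        exact h1
      have hle : ‖Q ((r : ℂ)⁻¹ • x)‖ ≤ M := le_csSup hMbdd ⟨_, hz, rfl⟩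
      calc ‖Q x‖ = ‖Q ((r : ℂ) • ((r : ℂ)⁻¹ • x))‖ := by rw [← hxr]
      _ = r ^ N * ‖Q ((r : ℂ)⁻¹ • x)‖ := hQnorm_smul r hr.le _
      _ ≤ r ^ N * M := mul_le_mul_of_nonneg_left hle (by positivity)
      _ = M * r ^ N := mul_comm _ _
    have cont : Tendsto (fun r : ℝ => M * r ^ N) (𝓝[>] ‖x‖) (𝓝 (M * ‖x‖ ^ N)) := by
      apply Tendsto.mono_left _ nhdsWithin_le_nhds
      exact (Continuous.tendsto (by fun_prop) _)
    apply ge_of_tendsto cont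
    filter_upwards [Ioo_mem_nhdsGT_of_mem ⟨le_refl ‖x‖, hx⟩] with r hr
    exact key r hr.1 hr.2
  -- sNorm formula
  have hsNorm_eq : ∀ s : ℝ, 0 ≤ s → sNorm s Q = s ^ N * M := by
    intro s hs
    have hfun : (fun x : X => ‖Q ((s : ℂ) • x)‖) = fun x => s ^ N * ‖Q x‖ :=
      funext (hQnorm_smul s hs)
    rw [sNorm, hfun, hM_def, supNorm]
    exact csSup_image_mul_aux (s ^ N) (by positivity) _ (fun x => norm_nonneg _) _
      hball_ne ‖A‖ hB
  -- vNorm set bounded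
  have hVbdd : BddAbove ((fun x : X => (1 - ‖x‖ ^ 2) * ‖Q x‖) '' ball1) := by
    refine ⟨‖A‖, ?_⟩
    rintro y ⟨x, hx, rfl⟩
    have h1 : (1 - ‖x‖ ^ 2) ≤ 1 := by nlinarith [norm_nonneg x]
    have h2 : 0 ≤ 1 - ‖x‖ ^ 2 := by
      have : ‖x‖ < 1 := hx
      nlinarith [norm_nonneg x]
    calc (1 - ‖x‖ ^ 2) * ‖Q x‖ ≤ 1 * ‖Q x‖ :=
      mul_le_mul_of_nonneg_right h1 (norm_nonneg _)
    _ = ‖Q x‖ := one_mul _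
    _ ≤ ‖A‖ := hB x hx
  have hst_pos : 0 < st := st_pos N hN
  have hst_lt : st < 1 := st_lt_one N
  have hst_sq : st ^ 2 = (N : ℝ) / (N + 2) := st_sq N
  -- vNorm formula
  have hvNorm_eq : vNorm Q = gf N st * M := by
    apply le_antisymm
    · apply Real.sSup_le
      · rintro y ⟨x, hx, rfl⟩
        have hx' : ‖x‖ < 1 := hx
        have h2 : 0 ≤ 1 - ‖x‖ ^ 2 := by nlinarith [norm_nonneg x]
        calc (1 - ‖x‖ ^ 2) * ‖Q x‖ ≤ (1 - ‖x‖ ^ 2) * (M * ‖x‖ ^ N) :=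
          mul_le_mul_of_nonneg_left (qbound x hx') h2
        _ = gf N ‖x‖ * M := by rw [gf]; ring
        _ ≤ gf N st * M := by
            apply mul_le_mul_of_nonneg_right _ hM_nonneg
            exact gf_le_max N hN (norm_nonneg x) hx'.le
      · exact mul_nonneg (gf_max_pos N hN).le hM_nonneg
    · have himg : gf N st * M = sSup ((fun x : X => gf N st * ‖Q x‖) '' ball1) := by
        rw [hM_def, supNorm]
        exact (csSup_image_mul_aux (gf N st) (gf_max_pos N hN).le _
          (fun x => norm_nonneg _) _ hball_ne ‖A‖ hB).symm
      rw [himg]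
      apply Real.sSup_le
      · rintro y ⟨x, hx, rfl⟩
        have hx' : ‖x‖ < 1 := hx
        have hnorm_stx : ‖(st : ℂ) • x‖ = st * ‖x‖ := by
          rw [norm_smul, Complex.norm_real, Real.norm_eq_abs, abs_of_nonneg hst_pos.le]
        have hmem : (st : ℂ) • x ∈ ball1 := by
          rw [hball1]
          simp only [Set.mem_setOf_eq, hnorm_stx]
          nlinarith [norm_nonneg x]
        have heq : gf N st * ‖Q x‖ = (1 - st ^ 2) * ‖Q ((st : ℂ) • x)‖ := by
          rw [hQnorm_smul st hst_pos.le, gf]; ring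
        have hle2 : (1 - st ^ 2) * ‖Q ((st : ℂ) • x)‖ ≤
            (1 - ‖(st : ℂ) • x‖ ^ 2) * ‖Q ((st : ℂ) • x)‖ := by
          apply mul_le_mul_of_nonneg_right _ (norm_nonneg _)
          rw [hnorm_stx]
          have hxx : ‖x‖ ^ 2 ≤ 1 := by nlinarith [norm_nonneg x]
          nlinarith [mul_nonneg (sq_nonneg st) (sub_nonneg.mpr hxx)]
        calc gf N st * ‖Q x‖ = (1 - st ^ 2) * ‖Q ((st : ℂ) • x)‖ := heq
        _ ≤ (1 - ‖(st : ℂ) • x‖ ^ 2) * ‖Q ((st : ℂ) • x)‖ := hle2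
        _ ≤ vNorm Q := le_csSup hVbdd ⟨_, hmem, rfl⟩
      · have : (0:ℝ) ≤ (1 - ‖(0:X)‖ ^ 2) * ‖Q 0‖ := by simp [norm_zero]
        exact le_trans this (le_csSup hVbdd ⟨0, by simp [hball1], rfl⟩)
  -- compactness argument
  set K : Set ℝ := Set.Icc 0 1 ∩ {s : ℝ | ε ≤ |s - st|} with hK_def
  have hKclosed : IsClosed {s : ℝ | ε ≤ |s - st|} := by
    apply isClosed_le continuous_const
    exact (continuous_id.sub continuous_const).abs
  have hKcompact : IsCompact K := isCompact_Icc.inter_right hKclosed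
  by_cases hKne : K.Nonempty
  · obtain ⟨s₀, hs₀K, hs₀max⟩ := hKcompact.exists_isMaxOn hKne (gf_cont N).continuousOn
    have hs₀ne : s₀ ≠ st := by
      intro h
      have := hs₀K.2
      rw [h] at this
      simp at this
      linarith
    have hlt : gf N s₀ < gf N st := gf_lt_max N hN hs₀K.1.1 hs₀K.1.2 hs₀ne
    refine ⟨(gf N st - gf N s₀) * M / 2, div_pos (mul_pos (sub_pos.mpr hlt) hM_pos) two_pos, ?_⟩
    intro s hs0 hs1 hsd
    have hsK : s ∈ K := ⟨⟨hs0, hs1⟩, le_of_lt hsd⟩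
    have h1 : gf N s ≤ gf N s₀ := hs₀max hsK
    calc (1 - s ^ 2) * sNorm s Q = gf N s * M := by
          rw [hsNorm_eq s hs0, gf]; ring
      _ ≤ gf N s₀ * M := mul_le_mul_of_nonneg_right h1 hM_nonneg
      _ < gf N st * M - (gf N st - gf N s₀) * M / 2 := by nlinarith [hM_pos, hlt]
      _ = vNorm Q - (gf N st - gf N s₀) * M / 2 := by rw [hvNorm_eq]
  · refine ⟨gf N st * M / 2, div_pos (mul_pos (gf_max_pos N hN) hM_pos) two_pos, ?_⟩
    intro s hs0 hs1 hsd
    exact absurd ⟨s, ⟨hs0, hs1⟩, hsd.le⟩ hKne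
end

section
/- Let X and Y be complex Banach spaces and N ≥ 1. Then every polynomial P : X → Y of degree at most N is Lipschitz on the open unit ball B_X with Lipschitz constant ‖P‖_v · M_N/4, i.e. ‖P(x) − P(y)‖ ≤ (‖P‖_v · M_N/4)‖x − y‖ for all x, y ∈ B_X. -/
open Filter Topology Metric

/-- `s(1/2, N) = (1 - N!/(2 N^{N+1}))^{1/N}`. -/
noncomputable def sHalf (N : ℕ) : ℝ :=
  (1 - (Nat.factorial N : ℝ) / (2 * (N : ℝ) ^ (N + 1))) ^ ((1 : ℝ) / N)

/-- The constant `M_N = 8 (1 - s(1/2,N)²)⁻¹ ∑_{n=1}^N 2^{2n-1} n^n / n!`. -/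
noncomputable def MN (N : ℕ) : ℝ :=
  8 * (1 - sHalf N ^ 2)⁻¹ *
    ∑ n ∈ Finset.Icc 1 N, (2 : ℝ) ^ (2 * n - 1) * (n : ℝ) ^ n / (Nat.factorial n : ℝ)

lemma coeff_bound {Y : Type*} [NormedAddCommGroup Y] [NormedSpace ℂ Y] [CompleteSpace Y]
    (m : ℕ) (a : ℕ → Y) (M : ℝ)
    (hM : ∀ θ : ℝ, ‖∑ j ∈ Finset.range m, Complex.exp (θ * Complex.I) ^ j • a j‖ ≤ M)
    (k : ℕ) (hk : k < m) : ‖a k‖ ≤ M := by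
  have hπ : (0:ℝ) < 2 * Real.pi := by positivity
  set g : ℝ → Y := fun θ => ∑ j ∈ Finset.range m,
    Complex.exp ((((j:ℂ) - (k:ℂ)) * Complex.I) * (θ:ℂ)) • a j with hg
  have hgnorm : ∀ θ : ℝ, ‖g θ‖ ≤ M := by
    intro θ
    have h1 : g θ = Complex.exp ((-(k:ℂ)) * Complex.I * (θ:ℂ)) •
        ∑ j ∈ Finset.range m, Complex.exp ((θ:ℂ) * Complex.I) ^ j • a j := by
      rw [Finset.smul_sum]
      refine Finset.sum_congr rfl fun j hj => ?_
      rw [smul_smul, ← Complex.exp_nat_mul, ← Complex.exp_add]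
      ring_nf
    have h2 : ‖Complex.exp ((-(k:ℂ)) * Complex.I * (θ:ℂ))‖ = 1 := by
      rw [Complex.norm_exp]
      simp [Complex.mul_re]
    rw [h1, norm_smul, h2, one_mul]
    exact hM θ
  have hint : ∀ j : ℕ, IntervalIntegrable
      (fun θ : ℝ => Complex.exp ((((j:ℂ) - (k:ℂ)) * Complex.I) * (θ:ℂ)) • a j)
      MeasureTheory.volume 0 (2*Real.pi) := by
    intro j
    apply Continuous.intervalIntegrable
    exact (Complex.continuous_exp.comp (by continuity)).smul continuous_const
  have key : (∫ θ in (0:ℝ)..(2*Real.pi), g θ) = ((2*Real.pi : ℝ) : ℂ) • a k := by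
    simp only [hg]
    rw [intervalIntegral.integral_finset_sum (fun j _ => hint j)]
    rw [Finset.sum_eq_single k]
    · rw [intervalIntegral.integral_smul_const]
      have h3 : (fun θ : ℝ => Complex.exp ((((k:ℂ) - (k:ℂ)) * Complex.I) * (θ:ℂ)))
          = fun _ : ℝ => (1:ℂ) := by
        funext θ; simp
      rw [h3]
      rw [intervalIntegral.integral_const]
      simp [smul_smul, Complex.real_smul]
    · intro j hj hjk
      rw [intervalIntegral.integral_smul_const]
      have hc : (((j:ℂ) - (k:ℂ)) * Complex.I) ≠ 0 := by
        refine mul_ne_zero (sub_ne_zero.mpr ?_) Complex.I_ne_zero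
        exact_mod_cast hjk
      rw [integral_exp_mul_complex hc]
      have h2 : Complex.exp ((((j:ℂ)-(k:ℂ)) * Complex.I) * (2 * (Real.pi:ℂ))) = 1 := by
        rw [show ((((j:ℂ)-(k:ℂ)) * Complex.I) * (2 * (Real.pi:ℂ)))
            = (((j:ℤ) - (k:ℤ) : ℤ) : ℂ) * (2 * (Real.pi:ℂ) * Complex.I) by push_cast; ring]
        exact Complex.exp_int_mul_two_pi_mul_I _
      rw [show ((((j:ℂ)-(k:ℂ)) * Complex.I) * ((2*Real.pi:ℝ):ℂ))
          = (((j:ℂ)-(k:ℂ)) * Complex.I) * (2 * (Real.pi:ℂ)) by push_cast; ring]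
      simp [h2]
    · intro h; exact absurd (Finset.mem_range.mpr hk) h
  have hnorm := intervalIntegral.norm_integral_le_of_norm_le_const
    (C := M) (f := g) (a := 0) (b := 2*Real.pi) (fun θ _ => hgnorm θ)
  rw [key, norm_smul] at hnorm
  have h4 : ‖((2*Real.pi : ℝ) : ℂ)‖ = 2 * Real.pi := by
    rw [Complex.norm_real, Real.norm_eq_abs, abs_of_pos hπ]
  rw [h4] at hnorm
  have h5 : |2*Real.pi - 0| = 2*Real.pi := by rw [sub_zero, abs_of_pos hπ]
  rw [h5] at hnorm
  nlinarith [norm_nonneg (a k)]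

lemma fact_le_pow' : ∀ m : ℕ, (m+1).factorial ≤ (m+1) ^ m
  | 0 => le_refl 1
  | (m+1) => by
    rw [Nat.factorial_succ]
    calc (m+1+1) * (m+1).factorial ≤ (m+2) * (m+1)^m :=
          Nat.mul_le_mul_left _ (fact_le_pow' m)
      _ ≤ (m+2) * (m+2)^m := Nat.mul_le_mul_left _ (Nat.pow_le_pow_left (by omega) m)
      _ = (m+2)^(m+1) := (pow_succ' _ _).symm

lemma nat_mul_fact_le (n : ℕ) (hn : 1 ≤ n) : n * n.factorial ≤ n ^ n := by
  obtain ⟨m, rfl⟩ := Nat.exists_eq_add_of_le hn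
  calc (1+m) * (1+m).factorial = (m+1) * (m+1).factorial := by ring_nf
    _ ≤ (m+1) * (m+1)^m := Nat.mul_le_mul_left _ (fact_le_pow' m)
    _ = (m+1)^(m+1) := (pow_succ' _ _).symm
    _ = (1+m)^(1+m) := by ring_nf

lemma sHalf_inv_bound (N : ℕ) (hN : 1 ≤ N) :
    0 < 1 - sHalf N ^ 2 ∧ (4/3 : ℝ) ≤ (1 - sHalf N ^ 2)⁻¹ := by
  have hNpos : (0:ℝ) < (N:ℝ) := by exact_mod_cast hN
  have hb0 : (0:ℝ) < (N:ℝ)^(N+1) := by positivity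
  have hfle : (N.factorial : ℝ) ≤ (N:ℝ)^(N+1) := by
    have h1 : N.factorial ≤ N^(N+1) :=
      le_trans (Nat.factorial_le_pow N) (Nat.pow_le_pow_right hN (by omega))
    exact_mod_cast h1
  have hfpos : (0:ℝ) < (N.factorial : ℝ) := by positivity
  set b : ℝ := 1 - (N.factorial : ℝ)/(2*(N:ℝ)^(N+1)) with hbdef
  have hb_half : 1/2 ≤ b := by
    have h2 : (N.factorial : ℝ)/(2*(N:ℝ)^(N+1)) ≤ 1/2 := by
      rw [div_le_div_iff₀ (by positivity) (by norm_num)]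
      linarith
    simp only [hbdef]; linarith
  have hb_lt : b < 1 := by
    have h3 : 0 < (N.factorial : ℝ)/(2*(N:ℝ)^(N+1)) := by positivity
    simp only [hbdef]; linarith
  have hs_def : sHalf N = b ^ ((1:ℝ)/N) := rfl
  have hs_ge : 1/2 ≤ sHalf N := by
    rw [hs_def]
    calc (1/2 : ℝ) ≤ b := hb_half
      _ = b ^ (1:ℝ) := (Real.rpow_one b).symm
      _ ≤ b ^ ((1:ℝ)/N) := Real.rpow_le_rpow_of_exponent_ge
          (lt_of_lt_of_le one_half_pos hb_half) (le_of_lt hb_lt)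
          (by rw [div_le_one hNpos]; exact_mod_cast hN)
  have hs_lt : sHalf N < 1 := by
    rw [hs_def]
    exact Real.rpow_lt_one (le_of_lt (lt_of_lt_of_le one_half_pos hb_half)) hb_lt (by positivity)
  have hpos : 0 < 1 - sHalf N ^ 2 := by nlinarith
  refine ⟨hpos, ?_⟩
  have h34 : 1 - sHalf N ^ 2 ≤ 3/4 := by nlinarith
  have h5 : ((3:ℝ)/4)⁻¹ ≤ (1 - sHalf N ^ 2)⁻¹ := by
    apply inv_anti₀ hpos h34
  norm_num at h5
  linarith

lemma arith_bound (N : ℕ) (hN : 1 ≤ N) (V : ℝ) (hV : 0 ≤ V) :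
    ∑ n ∈ Finset.range (N+1), (n:ℝ) * ((4:ℝ)^n * (4/3*V)) ≤ V * MN N / 4 := by
  obtain ⟨hpos, hinv⟩ := sHalf_inv_bound N hN
  set inv : ℝ := (1 - sHalf N ^ 2)⁻¹ with hinvdef
  have hsub : Finset.Icc 1 N ⊆ Finset.range (N+1) := by
    intro x hx
    simp only [Finset.mem_Icc] at hx
    simp only [Finset.mem_range]; omega
  have hL : ∑ n ∈ Finset.range (N+1), (n:ℝ) * ((4:ℝ)^n * (4/3*V))
      = ∑ n ∈ Finset.Icc 1 N, (n:ℝ) * ((4:ℝ)^n * (4/3*V)) := by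
    refine (Finset.sum_subset hsub fun x hx hnx => ?_).symm
    simp only [Finset.mem_range] at hx
    simp only [Finset.mem_Icc, not_and, not_le] at hnx
    have : x = 0 := by omega
    simp [this]
  have hR : V * MN N / 4
      = ∑ n ∈ Finset.Icc 1 N,
          2 * inv * V * ((2:ℝ)^(2*n-1) * (n:ℝ)^n / (Nat.factorial n : ℝ)) := by
    rw [MN, ← hinvdef, ← Finset.mul_sum]
    ring
  rw [hL, hR]
  refine Finset.sum_le_sum fun n hn => ?_
  simp only [Finset.mem_Icc] at hn
  obtain ⟨hn1, hnN⟩ := hn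
  have hfpos : (0:ℝ) < (Nat.factorial n : ℝ) := by positivity
  have hfact : (n:ℝ) ≤ (n:ℝ)^n / (Nat.factorial n : ℝ) := by
    rw [le_div_iff₀ hfpos]
    exact_mod_cast nat_mul_fact_le n hn1
  have h4 : (2:ℝ)^(2*n-1) = (4:ℝ)^n / 2 := by
    have e1 : (4:ℝ)^n = (2:ℝ)^(2*n) := by
      rw [show (4:ℝ) = 2^2 by norm_num, ← pow_mul]
    have e2 : (2:ℝ)^(2*n) = (2:ℝ)^(2*n-1) * 2 := by
      rw [← pow_succ]
      congr 1
      omega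
    rw [e1, e2]
    ring
  rw [h4]
  have key : (4/3 : ℝ) * n ≤ inv * ((n:ℝ)^n / (Nat.factorial n : ℝ)) :=
    mul_le_mul hinv hfact (by positivity) (by linarith)
  have h4pos : (0:ℝ) ≤ (4:ℝ)^n * V := by positivity
  calc (n:ℝ) * ((4:ℝ)^n * (4/3*V)) = (4/3 * n) * ((4:ℝ)^n * V) := by ring
    _ ≤ (inv * ((n:ℝ)^n / (Nat.factorial n : ℝ))) * ((4:ℝ)^n * V) :=
        mul_le_mul_of_nonneg_right key h4pos
    _ = 2 * inv * V * ((4:ℝ)^n / 2 * (n:ℝ)^n / (Nat.factorial n : ℝ)) := by ring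


/-- every polynomial of degree at most `N` is Lipschitz on the open unit ball
with constant `‖P‖_v · M_N / 4`. -/
theorem stmt12 {X Y : Type*} [NormedAddCommGroup X] [NormedSpace ℂ X] [CompleteSpace X]
    [NormedAddCommGroup Y] [NormedSpace ℂ Y] [CompleteSpace Y]
    (N : ℕ) (hN : 1 ≤ N) (P : X → Y) (hP : IsPolyDeg N P) :
    ∀ x y : X, ‖x‖ < 1 → ‖y‖ < 1 →
      ‖P x - P y‖ ≤ vNorm P * MN N / 4 * ‖x - y‖ := by
  classical
  obtain ⟨Pk, hPk, hsum⟩ := hP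
  choose A hA using hPk
  -- homogeneity of components
  have hhom : ∀ n (hn : n ≤ N) (c : ℂ) (w : X), Pk n (c • w) = c ^ n • Pk n w := by
    intro n hn c w
    rw [hA n hn, hA n hn]
    have h := (A n hn).toMultilinearMap.map_smul_univ (fun _ : Fin n => c) (fun _ => w)
    simpa using h
  -- bound for P on the closed unit ball
  set D : ℝ := ∑ k ∈ (Finset.range (N+1)).attach,
    ‖A k.1 (Nat.lt_succ_iff.mp (Finset.mem_range.mp k.2))‖ with hD
  have hPleD : ∀ w : X, ‖w‖ ≤ 1 → ‖P w‖ ≤ D := by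
    intro w hw
    rw [hsum w, ← Finset.sum_attach (Finset.range (N+1)) (fun k => Pk k w)]
    refine le_trans (norm_sum_le _ _) (Finset.sum_le_sum fun k _ => ?_)
    have hk : k.1 ≤ N := Nat.lt_succ_iff.mp (Finset.mem_range.mp k.2)
    rw [hA k.1 hk]
    refine le_trans ((A k.1 hk).le_opNorm _) ?_
    have : ∏ _i : Fin k.1, ‖w‖ = ‖w‖ ^ (k.1) := by
      simp [Finset.prod_const]
    rw [this]
    calc ‖A k.1 hk‖ * ‖w‖ ^ k.1 ≤ ‖A k.1 hk‖ * 1 :=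
          mul_le_mul_of_nonneg_left (pow_le_one₀ (norm_nonneg w) hw) (norm_nonneg _)
      _ = ‖A k.1 hk‖ := mul_one _
  -- vNorm facts
  set V : ℝ := vNorm P with hVdef
  have hVb : ∀ w : X, ‖w‖ < 1 → (1 - ‖w‖ ^ 2) * ‖P w‖ ≤ V := by
    intro w hw
    apply le_csSup
    · refine ⟨D, ?_⟩
      rintro v ⟨z, hz, rfl⟩
      simp only [Set.mem_setOf_eq] at hz
      show (1 - ‖z‖ ^ 2) * ‖P z‖ ≤ D
      have h1 : (0:ℝ) ≤ 1 - ‖z‖^2 := by nlinarith [norm_nonneg z]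
      have h2 : 1 - ‖z‖^2 ≤ 1 := by nlinarith [norm_nonneg z]
      have h3 : ‖P z‖ ≤ D := hPleD z (le_of_lt hz)
      have h4 : (0:ℝ) ≤ D := le_trans (norm_nonneg _) h3
      nlinarith [norm_nonneg (P z)]
    · exact ⟨w, hw, rfl⟩
  have hV0 : (0:ℝ) ≤ V := by
    have := hVb 0 (by simp)
    simp at this
    exact le_trans (by positivity) this
  have hPb : ∀ w : X, ‖w‖ ≤ 1/2 → ‖P w‖ ≤ 4/3 * V := by
    intro w hw
    have h1 : ‖w‖ < 1 := lt_of_le_of_lt hw (by norm_num)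
    have h2 := hVb w h1
    have h3 : (3/4 : ℝ) ≤ 1 - ‖w‖^2 := by nlinarith [norm_nonneg w]
    nlinarith [norm_nonneg (P w)]
  -- component bounds
  have hcomp : ∀ n, n ≤ N → ∀ w : X, ‖w‖ ≤ 1/2 → ‖Pk n w‖ ≤ 4/3 * V := by
    intro n hn w hw
    refine coeff_bound (N+1) (fun j => Pk j w) (4/3*V) ?_ n (by omega)
    intro θ
    have hθ : ‖Complex.exp ((θ:ℂ) * Complex.I)‖ = 1 := by
      exact Complex.norm_exp_ofReal_mul_I θ
    have h1 : ∑ j ∈ Finset.range (N+1), Complex.exp ((θ:ℂ) * Complex.I) ^ j • Pk j w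
        = P (Complex.exp ((θ:ℂ) * Complex.I) • w) := by
      rw [hsum]
      refine Finset.sum_congr rfl fun j hj => ?_
      rw [hhom j (Nat.lt_succ_iff.mp (Finset.mem_range.mp hj))]
    rw [h1]
    apply hPb
    rw [norm_smul, hθ, one_mul]
    exact hw
  have hcomp2 : ∀ n, n ≤ N → ∀ w : X, ‖w‖ ≤ 2 → ‖Pk n w‖ ≤ (4:ℝ)^n * (4/3 * V) := by
    intro n hn w hw
    have e1 : (4:ℂ) • ((4:ℂ)⁻¹ • w) = w := by
      rw [smul_smul, mul_inv_cancel₀ (by norm_num), one_smul]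
    have e2 : Pk n w = (4:ℂ)^n • Pk n ((4:ℂ)⁻¹ • w) := by
      conv_lhs => rw [← e1]
      rw [hhom n hn]
    rw [e2, norm_smul]
    have e3 : ‖(4:ℂ)^n‖ = (4:ℝ)^n := by
      rw [norm_pow]
      norm_num
    rw [e3]
    refine mul_le_mul_of_nonneg_left ?_ (by positivity)
    apply hcomp n hn
    rw [norm_smul]
    have : ‖(4:ℂ)⁻¹‖ = (4:ℝ)⁻¹ := by norm_num
    rw [this]
    linarith
  -- main estimate
  intro x y hx hy
  rcases eq_or_ne x y with rfl | hxy
  · simp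
  have hxyn : (0:ℝ) < ‖x - y‖ := by
    rw [norm_pos_iff, sub_ne_zero]; exact hxy
  set t : ℝ := ‖x - y‖ / 2 with htdef
  have ht : 0 < t := by positivity
  have htC : ((t:ℝ):ℂ) ≠ 0 := by exact_mod_cast ne_of_gt ht
  have ht1 : t < 1 := by
    have := norm_sub_le x (-y)  -- not right; do directly
    have h := norm_sub_le x y
    simp only [htdef]
    have h2 : ‖x - y‖ ≤ ‖x‖ + ‖y‖ := norm_sub_le x y
    linarith
  set c : X := (2:ℂ)⁻¹ • (x + y) with hcdef
  set u : X := ((t:ℝ):ℂ)⁻¹ • ((2:ℂ)⁻¹ • (y - x)) with hudef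
  have hcu : ((t:ℝ):ℂ) • u = (2:ℂ)⁻¹ • (y - x) := by
    rw [hudef, smul_smul, mul_inv_cancel₀ htC, one_smul]
  have hy' : c + ((t:ℝ):ℂ) • u = y := by
    rw [hcu, hcdef]
    module
  have hx' : c + (-((t:ℝ):ℂ)) • u = x := by
    have : (-((t:ℝ):ℂ)) • u = -(((t:ℝ):ℂ) • u) := by rw [neg_smul]
    rw [this, hcu, hcdef]
    module
  -- per-component difference bound
  have hbound : ∀ n, n ≤ N → ‖Pk n x - Pk n y‖ ≤ (n:ℝ) * (‖x - y‖ * ((4:ℝ)^n * (4/3*V))) := by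
    intro n hn
    obtain ⟨b, hbdef⟩ : ∃ b : ℕ → Y, ∀ k, b k =
        ∑ S ∈ Finset.univ.filter (fun S : Finset (Fin n) => S.card = k),
          A n hn (S.piecewise (fun _ => u) (fun _ => c)) := ⟨_, fun _ => rfl⟩
    have hexp : ∀ lam : ℂ, Pk n (c + lam • u) = ∑ k ∈ Finset.range (n+1), lam ^ k • b k := by
      intro lam
      rw [hA n hn]
      have e1 : (fun _ : Fin n => c + lam • u)
          = ((fun _ : Fin n => lam • u) + fun _ : Fin n => c) := by
        funext i
        show c + lam • u = lam • u + c
        exact add_comm _ _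
      rw [e1]
      have hadd := (A n hn).toMultilinearMap.map_add_univ
        (fun _ : Fin n => lam • u) (fun _ : Fin n => c)
      simp only [ContinuousMultilinearMap.coe_coe] at hadd
      rw [hadd]
      have e2 : ∀ S : Finset (Fin n), (A n hn) (S.piecewise (fun _ => lam • u) (fun _ => c))
          = lam ^ S.card • (A n hn) (S.piecewise (fun _ => u) (fun _ => c)) := by
        intro S
        have hpw : (S.piecewise (fun _ => lam • u) (fun _ => c))
            = S.piecewise (fun i => lam • (S.piecewise (fun _ : Fin n => u) (fun _ => c)) i)
              (S.piecewise (fun _ => u) (fun _ => c)) := by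
          funext i
          by_cases h : i ∈ S <;> simp [Finset.piecewise, h]
        rw [hpw]
        have h3 := (A n hn).toMultilinearMap.map_piecewise_smul (fun _ : Fin n => lam)
          (S.piecewise (fun _ => u) (fun _ => c)) S
        simp only [ContinuousMultilinearMap.coe_coe] at h3
        rw [h3, Finset.prod_const]
      calc ∑ S : Finset (Fin n), (A n hn) (S.piecewise (fun _ => lam • u) (fun _ => c))
          = ∑ S : Finset (Fin n),
              lam ^ S.card • (A n hn) (S.piecewise (fun _ => u) (fun _ => c)) :=
            Finset.sum_congr rfl fun S _ => e2 S
        _ = ∑ k ∈ Finset.range (n+1),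
              ∑ S ∈ Finset.univ.filter (fun S : Finset (Fin n) => S.card = k),
                lam ^ S.card • (A n hn) (S.piecewise (fun _ => u) (fun _ => c)) :=
            (Finset.sum_fiberwise_of_maps_to (fun S _ => Finset.mem_range.mpr
              (Nat.lt_succ_of_le (by simpa using Finset.card_le_univ S))) _).symm
        _ = ∑ k ∈ Finset.range (n+1), lam ^ k • b k := by
            refine Finset.sum_congr rfl fun k hk => ?_
            rw [hbdef k, Finset.smul_sum]
            refine Finset.sum_congr rfl fun S hS => ?_
            rw [(Finset.mem_filter.mp hS).2]
    have hbk : ∀ k, k < n+1 → ‖b k‖ ≤ (4:ℝ)^n * (4/3*V) := by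
      intro k hk
      refine coeff_bound (n+1) b ((4:ℝ)^n * (4/3*V)) ?_ k hk
      intro θ
      have h1 : ∑ j ∈ Finset.range (n+1), Complex.exp ((θ:ℂ)*Complex.I) ^ j • b j
          = Pk n (c + Complex.exp ((θ:ℂ)*Complex.I) • u) := (hexp _).symm
      rw [h1]
      apply hcomp2 n hn
      have hcn : ‖c‖ < 1 := by
        rw [hcdef, norm_smul]
        have h6 : ‖(2:ℂ)⁻¹‖ = (2:ℝ)⁻¹ := by norm_num
        rw [h6]
        have h7 := norm_add_le x y
        nlinarith
      have hun : ‖u‖ = 1 := by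
        rw [hudef, norm_smul, norm_smul]
        have h2 : ‖(2:ℂ)⁻¹‖ = (2:ℝ)⁻¹ := by norm_num
        have h3 : ‖(((t:ℝ)):ℂ)⁻¹‖ = t⁻¹ := by
          rw [norm_inv, Complex.norm_real, Real.norm_eq_abs, abs_of_pos ht]
        rw [h2, h3, norm_sub_rev]
        rw [htdef]
        field_simp
      have hθ : ‖Complex.exp ((θ:ℂ) * Complex.I)‖ = 1 := by
        exact Complex.norm_exp_ofReal_mul_I θ
      calc ‖c + Complex.exp ((θ:ℂ)*Complex.I) • u‖
          ≤ ‖c‖ + ‖Complex.exp ((θ:ℂ)*Complex.I) • u‖ := norm_add_le _ _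
        _ = ‖c‖ + 1 := by
            congr 1
            rw [norm_smul, hθ, one_mul, hun]
        _ ≤ 2 := by linarith
    have hdiff : Pk n x - Pk n y
        = ∑ k ∈ Finset.range (n+1), ((-((t:ℝ):ℂ))^k - ((t:ℝ):ℂ)^k) • b k := by
      calc Pk n x - Pk n y
          = Pk n (c + (-((t:ℝ):ℂ)) • u) - Pk n (c + ((t:ℝ):ℂ) • u) := by rw [hx', hy']
        _ = (∑ k ∈ Finset.range (n+1), (-((t:ℝ):ℂ))^k • b k)
            - ∑ k ∈ Finset.range (n+1), ((t:ℝ):ℂ)^k • b k := by rw [hexp, hexp]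
        _ = ∑ k ∈ Finset.range (n+1), ((-((t:ℝ):ℂ))^k - ((t:ℝ):ℂ)^k) • b k := by
            rw [← Finset.sum_sub_distrib]
            exact Finset.sum_congr rfl fun k _ => (sub_smul _ _ _).symm
    rw [hdiff]
    refine le_trans (norm_sum_le _ _) ?_
    have hterm : ∀ k ∈ Finset.range (n+1), ‖((-((t:ℝ):ℂ))^k - ((t:ℝ):ℂ)^k) • b k‖
        ≤ if k = 0 then 0 else ‖x - y‖ * ((4:ℝ)^n * (4/3*V)) := by
      intro k hk
      rcases eq_or_ne k 0 with rfl | hk0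
      · simp
      · simp only [hk0, if_false]
        rw [norm_smul]
        have h1 : ‖(-((t:ℝ):ℂ))^k - ((t:ℝ):ℂ)^k‖ ≤ 2 * t^k := by
          calc ‖(-((t:ℝ):ℂ))^k - ((t:ℝ):ℂ)^k‖
              ≤ ‖(-((t:ℝ):ℂ))^k‖ + ‖((t:ℝ):ℂ)^k‖ := norm_sub_le _ _
            _ = 2 * t^k := by
                rw [norm_pow, norm_pow, norm_neg, Complex.norm_real, Real.norm_eq_abs,
                  abs_of_pos ht]
                ring
        have h2 : t^k ≤ t := by
          calc t^k ≤ t^1 := pow_le_pow_of_le_one (le_of_lt ht) (le_of_lt ht1)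
                (Nat.one_le_iff_ne_zero.mpr hk0)
            _ = t := pow_one t
        have h3 : 2 * t = ‖x - y‖ := by rw [htdef]; ring
        have h4 := hbk k (Finset.mem_range.mp hk)
        have h5 : (0:ℝ) ≤ (4:ℝ)^n * (4/3*V) := by positivity
        calc ‖(-((t:ℝ):ℂ))^k - ((t:ℝ):ℂ)^k‖ * ‖b k‖ ≤ (2*t) * ((4:ℝ)^n * (4/3*V)) :=
              mul_le_mul (by linarith) h4 (norm_nonneg _) (by linarith)
          _ = ‖x - y‖ * ((4:ℝ)^n * (4/3*V)) := by rw [← h3]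
    refine le_trans (Finset.sum_le_sum hterm) ?_
    rw [Finset.sum_range_succ']
    simp [Finset.sum_const, Finset.card_range, nsmul_eq_mul]
  -- assemble
  have htotal : ‖P x - P y‖
      ≤ ∑ n ∈ Finset.range (N+1), (n:ℝ) * (‖x - y‖ * ((4:ℝ)^n * (4/3*V))) := by
    have hd : P x - P y = ∑ n ∈ Finset.range (N+1), (Pk n x - Pk n y) := by
      rw [hsum x, hsum y, Finset.sum_sub_distrib]
    rw [hd]
    refine le_trans (norm_sum_le _ _) (Finset.sum_le_sum fun n hn => ?_)
    exact hbound n (Nat.lt_succ_iff.mp (Finset.mem_range.mp hn))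
  have harith := arith_bound N hN V hV0
  calc ‖P x - P y‖
      ≤ ∑ n ∈ Finset.range (N+1), (n:ℝ) * (‖x - y‖ * ((4:ℝ)^n * (4/3*V))) := htotal
    _ = (∑ n ∈ Finset.range (N+1), (n:ℝ) * ((4:ℝ)^n * (4/3*V))) * ‖x - y‖ := by
        rw [Finset.sum_mul]
        exact Finset.sum_congr rfl fun n _ => by ring
    _ ≤ (V * MN N / 4) * ‖x - y‖ := mul_le_mul_of_nonneg_right harith (norm_nonneg _)
end

section
/- Let X be a complex Banach space, (ρ_n) a sequence of positive reals with Σ_{n=1}^∞ ρ_n < ∞, and (x_n) a sequence in the closed unit ball of X such that dist(x_{n+1}, span_ℂ{x_n}) ≤ ρ_n for every n. Then there exist x in the closed unit ball of X and a strictly increasing map σ : ℕ → ℕ such that ‖x_{σ(n)} − x‖ → 0. -/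
open Filter Topology Metric

theorem aux13 {X : Type*} [NormedAddCommGroup X] [NormedSpace ℂ X] [CompleteSpace X]
    (ρ : ℕ → ℝ) (hρpos : ∀ n, 0 < ρ n) (hρsum : Summable ρ)
    (x : ℕ → X) (hx : ∀ n, ‖x n‖ ≤ 1)
    (δ : ℝ) (hδ : 0 < δ) (hδx : ∀ n, δ ≤ ‖x n‖)
    (hdist : ∀ n, Metric.infDist (x (n + 1))
      ((Submodule.span ℂ {x n} : Submodule ℂ X) : Set X) ≤ ρ n) :
    ∃ (y : X) (σ : ℕ → ℕ), ‖y‖ ≤ 1 ∧ StrictMono σ ∧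
      Tendsto (fun n => ‖x (σ n) - y‖) atTop (𝓝 0) := by
  have hxne : ∀ n, ‖x n‖ ≠ 0 := fun n => ne_of_gt (lt_of_lt_of_le hδ (hδx n))
  -- choose c
  have hc : ∀ n, ∃ c : ℂ, ‖x (n + 1) - c • x n‖ ≤ 2 * ρ n := by
    intro n
    have hne : ((Submodule.span ℂ {x n} : Submodule ℂ X) : Set X).Nonempty :=
      ⟨0, Submodule.zero_mem _⟩
    have hlt : Metric.infDist (x (n + 1))
        ((Submodule.span ℂ {x n} : Submodule ℂ X) : Set X) < 2 * ρ n :=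
      lt_of_le_of_lt (hdist n) (by linarith [hρpos n])
    obtain ⟨z, hz, hzlt⟩ := (Metric.infDist_lt_iff hne).mp hlt
    obtain ⟨c, rfl⟩ := Submodule.mem_span_singleton.mp hz
    exact ⟨c, by rw [← dist_eq_norm]; exact hzlt.le⟩
  choose c hc using hc
  set u : ℕ → X := fun n => ((‖x n‖⁻¹ : ℝ) : ℂ) • x n with hu
  have hun : ∀ n, ‖u n‖ = 1 := by
    intro n
    simp [hu, norm_smul, abs_of_nonneg (inv_nonneg.2 (norm_nonneg _)),
      inv_mul_cancel₀ (hxne n)]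
  set lam : ℕ → ℂ := fun n => ((‖x (n+1)‖⁻¹ * ‖x n‖ : ℝ) : ℂ) * c n with hlam
  have hulam : ∀ n, ‖u (n+1) - lam n • u n‖ ≤ 2 * ρ n / δ := by
    intro n
    have key : u (n+1) - lam n • u n = ((‖x (n+1)‖⁻¹ : ℝ) : ℂ) • (x (n+1) - c n • x n) := by
      have h0 : (‖x n‖ : ℂ) ≠ 0 := by exact_mod_cast hxne n
      have hs : lam n * ((‖x n‖⁻¹ : ℝ) : ℂ) = ((‖x (n+1)‖⁻¹ : ℝ) : ℂ) * c n := by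
        simp only [hlam]
        push_cast
        linear_combination ((‖x (n+1)‖ : ℂ))⁻¹ * c n * (mul_inv_cancel₀ h0)
      calc u (n+1) - lam n • u n
          = ((‖x (n+1)‖⁻¹ : ℝ) : ℂ) • x (n+1) - (lam n * ((‖x n‖⁻¹ : ℝ) : ℂ)) • x n := by
            simp [hu, smul_smul]
        _ = ((‖x (n+1)‖⁻¹ : ℝ) : ℂ) • x (n+1)
            - (((‖x (n+1)‖⁻¹ : ℝ) : ℂ) * c n) • x n := by rw [hs]
        _ = _ := by rw [smul_sub, mul_smul]
    rw [key, norm_smul]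
    have h1 : ‖((‖x (n+1)‖⁻¹ : ℝ) : ℂ)‖ = ‖x (n+1)‖⁻¹ := by
      simp [abs_of_nonneg (inv_nonneg.2 (norm_nonneg _))]
    rw [h1]
    calc ‖x (n+1)‖⁻¹ * ‖x (n+1) - c n • x n‖ ≤ δ⁻¹ * (2 * ρ n) := by
          apply mul_le_mul _ (hc n) (norm_nonneg _) (inv_nonneg.2 hδ.le)
          exact inv_anti₀ hδ (hδx (n+1))
      _ = 2 * ρ n / δ := by rw [div_eq_mul_inv]; ring
  -- unimodular μ
  set mu : ℕ → ℂ := fun n => if lam n = 0 then 1 else lam n / (‖lam n‖ : ℂ) with hmu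
  have hmuone : ∀ n, ‖mu n‖ = 1 := by
    intro n
    by_cases h : lam n = 0
    · simp [hmu, h]
    · have : ‖lam n‖ ≠ 0 := by simpa using h
      simp [hmu, h, norm_div,
        div_self this]
  have hmune : ∀ n, mu n ≠ 0 := by
    intro n h
    have := hmuone n
    rw [h] at this
    simp at this
  have hmulam : ∀ n, ‖mu n - lam n‖ ≤ 2 * ρ n / δ := by
    intro n
    have hn1 : |1 - ‖lam n‖| ≤ 2 * ρ n / δ := by
      have h1 := abs_norm_sub_norm_le (u (n+1)) (lam n • u n)
      rw [hun (n+1), norm_smul, hun n, mul_one] at h1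
      exact h1.trans (hulam n)
    by_cases h : lam n = 0
    · simp only [hmu, h, if_true]
      simpa [h] using hn1
    · have habsC : ((‖lam n‖ : ℝ) : ℂ) ≠ 0 := by simpa using h
      have hml : mu n - lam n = ((1 - ‖lam n‖ : ℝ) : ℂ) * mu n := by
        simp only [hmu, if_neg h]
        push_cast
        linear_combination lam n * div_self habsC
      rw [hml, norm_mul, hmuone n, mul_one, Complex.norm_real, Real.norm_eq_abs]
      have hna : ‖lam n‖ = ‖lam n‖ := rfl
      rw [← hna]
      exact hn1
  have h2 : ∀ n, ‖u (n+1) - mu n • u n‖ ≤ 4 * ρ n / δ := by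
    intro n
    have : u (n+1) - mu n • u n = (u (n+1) - lam n • u n) - (mu n - lam n) • u n := by
      rw [sub_smul]; abel
    rw [this]
    calc ‖(u (n+1) - lam n • u n) - (mu n - lam n) • u n‖
        ≤ ‖u (n+1) - lam n • u n‖ + ‖(mu n - lam n) • u n‖ := norm_sub_le _ _
      _ ≤ 2 * ρ n / δ + 2 * ρ n / δ := by
          apply add_le_add (hulam n)
          rw [norm_smul, hun n, mul_one]
          exact hmulam n
      _ = 4 * ρ n / δ := by ring
  -- products
  set pr : ℕ → ℂ := fun n => ∏ k ∈ Finset.range n, mu k with hpr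
  have hprone : ∀ n, ‖pr n‖ = 1 := by
    intro n
    rw [hpr]
    simp only
    rw [norm_prod]
    simp [hmuone]
  have hprne : ∀ n, pr n ≠ 0 := by
    intro n h
    have := hprone n
    rw [h] at this
    simp at this
  set w : ℕ → X := fun n => (pr n)⁻¹ • u n with hw
  have hwn : ∀ n, ‖w n‖ = 1 := by
    intro n
    rw [hw]
    simp only
    rw [norm_smul, norm_inv, hprone, hun]
    norm_num
  have hwdiff : ∀ n, ‖w (n+1) - w n‖ ≤ 4 * ρ n / δ := by
    intro n
    have hsucc : pr (n+1) = pr n * mu n := by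
      rw [hpr]; simp [Finset.prod_range_succ]
    have hscal : (pr (n+1))⁻¹ * mu n = (pr n)⁻¹ := by
      rw [hsucc, mul_inv, mul_assoc, inv_mul_cancel₀ (hmune n), mul_one]
    have key : w (n+1) - w n = (pr (n+1))⁻¹ • (u (n+1) - mu n • u n) := by
      calc w (n+1) - w n
          = (pr (n+1))⁻¹ • u (n+1) - ((pr (n+1))⁻¹ * mu n) • u n := by rw [hscal]
        _ = (pr (n+1))⁻¹ • (u (n+1) - mu n • u n) := by rw [smul_sub, mul_smul]
    rw [key, norm_smul, norm_inv, hprone]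
    norm_num
    exact h2 n
  have hsum4 : Summable (fun n => 4 * ρ n / δ) := by
    have he : (fun n => 4 * ρ n / δ) = fun n => (4 / δ) * ρ n := by
      funext n; ring
    rw [he]
    exact hρsum.mul_left _
  have hcauchy : CauchySeq w := by
    apply cauchySeq_of_summable_dist
    apply Summable.of_nonneg_of_le (fun n => dist_nonneg) (fun n => ?_) hsum4
    rw [dist_eq_norm, norm_sub_rev]
    exact hwdiff n
  obtain ⟨wlim, hwlim⟩ := cauchySeq_tendsto_of_complete hcauchy
  -- scalar factors
  set t : ℕ → ℂ := fun n => ((‖x n‖ : ℝ) : ℂ) * pr n with ht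
  have htb : ∀ n, t n ∈ Metric.closedBall (0 : ℂ) 1 := by
    intro n
    rw [Metric.mem_closedBall, dist_zero_right, ht]
    simp only
    rw [norm_mul, hprone, mul_one, Complex.norm_real, Real.norm_eq_abs,
      abs_of_nonneg (norm_nonneg _)]
    exact hx n
  obtain ⟨tlim, htlim, σ, hσ, hconv⟩ :=
    (isCompact_closedBall (0 : ℂ) 1).tendsto_subseq htb
  -- reconstruction
  have hxtw : ∀ n, x n = t n • w n := by
    intro n
    rw [hw, ht, hu]
    simp only
    rw [smul_smul, smul_smul]
    have h0 : ((‖x n‖ : ℝ) : ℂ) ≠ 0 := by exact_mod_cast hxne n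
    have hsc : ((‖x n‖ : ℝ) : ℂ) * pr n * (pr n)⁻¹ * ((‖x n‖⁻¹ : ℝ) : ℂ) = 1 := by
      push_cast
      linear_combination ((‖x n‖ : ℝ) : ℂ) * (((‖x n‖ : ℝ) : ℂ))⁻¹ *
        mul_inv_cancel₀ (hprne n) + mul_inv_cancel₀ h0
    rw [hsc, one_smul]
  refine ⟨tlim • wlim, σ, ?_, hσ, ?_⟩
  · rw [norm_smul]
    have h1 : ‖tlim‖ ≤ 1 := by
      simpa [dist_zero_right] using Metric.mem_closedBall.mp htlim
    have h2 : ‖wlim‖ ≤ 1 := by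
      have := Tendsto.comp (continuous_norm.tendsto wlim) hwlim
      have hle := le_of_tendsto' this (fun n => by rw [Function.comp_apply, hwn])
      exact hle
    calc ‖tlim‖ * ‖wlim‖ ≤ 1 * 1 := mul_le_mul h1 h2 (norm_nonneg _) zero_le_one
      _ = 1 := one_mul 1
  · have hws : Tendsto (fun n => w (σ n)) atTop (𝓝 wlim) :=
      hwlim.comp hσ.tendsto_atTop
    have hts : Tendsto (fun n => t (σ n)) atTop (𝓝 tlim) := hconv
    have : Tendsto (fun n => t (σ n) • w (σ n)) atTop (𝓝 (tlim • wlim)) :=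
      hts.smul hws
    have hxc : Tendsto (fun n => x (σ n)) atTop (𝓝 (tlim • wlim)) := by
      convert this using 2 with n
      exact hxtw (σ n)
    rw [← tendsto_iff_norm_sub_tendsto_zero]
    exact hxc

/-- if `(xₙ)` lies in the closed unit ball and
`dist(x_{n+1}, span ℂ {xₙ}) ≤ ρₙ` with `∑ ρₙ < ∞`, `ρₙ > 0`, then some subsequence of
`(xₙ)` converges in norm to a point of the closed unit ball. -/
theorem stmt13 {X : Type*} [NormedAddCommGroup X] [NormedSpace ℂ X] [CompleteSpace X]
    (ρ : ℕ → ℝ) (hρpos : ∀ n, 0 < ρ n) (hρsum : Summable ρ)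
    (x : ℕ → X) (hx : ∀ n, ‖x n‖ ≤ 1)
    (hdist : ∀ n, Metric.infDist (x (n + 1))
      ((Submodule.span ℂ {x n} : Submodule ℂ X) : Set X) ≤ ρ n) :
    ∃ (y : X) (σ : ℕ → ℕ), ‖y‖ ≤ 1 ∧ StrictMono σ ∧
      Tendsto (fun n => ‖x (σ n) - y‖) atTop (𝓝 0) := by
  by_cases hfreq : ∀ ε > (0 : ℝ), ∃ᶠ n in atTop, ‖x n‖ < ε
  · have h : ∀ m : ℕ, ∃ᶠ n in atTop, ‖x n‖ < 1 / (m + 1) := fun m =>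
      hfreq _ (by positivity)
    obtain ⟨σ, hσ, hσ2⟩ := Filter.extraction_forall_of_frequently h
    refine ⟨0, σ, by simp, hσ, ?_⟩
    apply squeeze_zero (fun n => norm_nonneg _) (fun n => ?_)
      tendsto_one_div_add_atTop_nhds_zero_nat
    simpa using (hσ2 n).le
  · push_neg at hfreq
    obtain ⟨ε, hε, hev⟩ := hfreq
    have hev : ∀ᶠ n in atTop, ¬ ‖x n‖ < ε := hev.mono fun n hn => not_lt.mpr hn
    obtain ⟨N, hN⟩ := Filter.eventually_atTop.mp hev
    obtain ⟨y, σ, hy, hσ, hconv⟩ := aux13 (fun n => ρ (n + N)) (fun n => hρpos _)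
      ((summable_nat_add_iff N).2 hρsum) (fun n => x (n + N)) (fun n => hx _)
      ε hε (fun n => not_lt.mp (hN _ (Nat.le_add_left N n)))
      (fun n => by
        have h1 : n + 1 + N = n + N + 1 := by ring
        simp only [h1]
        exact hdist (n + N))
    exact ⟨y, fun n => σ n + N, hy,
      fun a b hab => add_lt_add_left (hσ hab) N, hconv⟩
end

section
/- Let X be a uniformly convex complex Banach space, Y a complex Banach space, and N ≥ 1. Let x ∈ B_X, let P_x : X → X be a norm-one projection onto span_ℂ(x), let ρ ∈ (0,1), and let T_{ρ,x}(y) := (1 − ρ)y + ρP_x(y). Then for every polynomial P : X → Y of degree at most N one has ‖P(y) − P(T_{ρ,x}(y))‖ ≤ ρ · ‖P‖_v · M_N/2 for every y ∈ B_X. -/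
open Filter Topology Metric
open Finset

lemma ext_coeff {Y : Type*} [NormedAddCommGroup Y] [NormedSpace ℂ Y]
    (n : ℕ) (c : ℕ → Y) (C : ℝ)
    (h : ∀ z : ℂ, ‖z‖ = 1 → ‖∑ m ∈ Finset.range (n+1), z ^ m • c m‖ ≤ C) :
    ∀ m, m ≤ n → ‖c m‖ ≤ C := by
  intro m hm
  set K := n + 1 with hK
  have hK0 : (K : ℕ) ≠ 0 := Nat.succ_ne_zero n
  set ω : ℂ := Complex.exp (2 * Real.pi * Complex.I / K) with hω
  have hprim : IsPrimitiveRoot ω K := Complex.isPrimitiveRoot_exp K hK0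
  have hωK : ω ^ K = 1 := hprim.pow_eq_one
  have hωnorm : ‖ω‖ = 1 := Complex.norm_eq_one_of_pow_eq_one hωK hK0
  have key : ∑ j ∈ range K, (ω ^ j) ^ (K - m) • (∑ m' ∈ range K, (ω ^ j) ^ m' • c m')
      = (K : ℂ) • c m := by
    have h1 : ∀ j, (ω ^ j) ^ (K - m) • (∑ m' ∈ range K, (ω ^ j) ^ m' • c m')
        = ∑ m' ∈ range K, ((ω ^ (K - m + m')) ^ j) • c m' := by
      intro j
      rw [Finset.smul_sum]
      refine Finset.sum_congr rfl fun m' _ => ?_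
      rw [smul_smul, ← pow_add, ← pow_mul, mul_comm j, pow_mul]
    simp_rw [h1]
    rw [Finset.sum_comm]
    have h2 : ∀ m' ∈ range K, (∑ j ∈ range K, ((ω ^ (K - m + m')) ^ j) • c m')
        = (if m' = m then (K : ℂ) else 0) • c m' := by
      intro m' hm'
      rw [← Finset.sum_smul]
      congr 1
      by_cases he : m' = m
      · subst he
        have hKe : K - m' + m' = K := Nat.sub_add_cancel (by omega)
        rw [hKe, hωK, if_pos rfl]
        simp
      · rw [if_neg he]
        have hne : ω ^ (K - m + m') ≠ 1 := by
          intro hone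
          rw [hprim.pow_eq_one_iff_dvd] at hone
          obtain ⟨t, ht⟩ := hone
          have hm'K := Finset.mem_range.mp hm'
          have h2K : K * t < K * 2 := by omega
          have ht2 : t < 2 := Nat.lt_of_mul_lt_mul_left h2K
          have ht0 : t ≠ 0 := by rintro rfl; omega
          interval_cases t <;> omega
        rw [geom_sum_eq hne]
        have : (ω ^ (K - m + m')) ^ K = 1 := by
          rw [← pow_mul, mul_comm, pow_mul, hωK, one_pow]
        rw [this, sub_self, zero_div]
    rw [Finset.sum_congr rfl h2]
    rw [Finset.sum_eq_single m]
    · simp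
    · intro b _ hb; simp [if_neg hb]
    · intro hmm; exact absurd (Finset.mem_range.mpr (by omega)) hmm
  have hnorm : (K : ℝ) * ‖c m‖ ≤ (K : ℝ) * C := by
    have e1 : (K : ℝ) * ‖c m‖ = ‖(K : ℂ) • c m‖ := by
      rw [norm_smul, Complex.norm_natCast]
    rw [e1, ← key]
    calc ‖∑ j ∈ range K, (ω ^ j) ^ (K - m) • (∑ m' ∈ range K, (ω ^ j) ^ m' • c m')‖
        ≤ ∑ j ∈ range K, ‖(ω ^ j) ^ (K - m) • (∑ m' ∈ range K, (ω ^ j) ^ m' • c m')‖ :=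
          norm_sum_le _ _
      _ ≤ ∑ _j ∈ range K, C := by
          refine Finset.sum_le_sum fun j _ => ?_
          rw [norm_smul]
          have hωj : ‖(ω ^ j) ^ (K - m)‖ = 1 := by
            rw [norm_pow, norm_pow, hωnorm, one_pow, one_pow]
          rw [hωj, one_mul]
          exact h _ (by rw [norm_pow, hωnorm, one_pow])
      _ = (K : ℝ) * C := by rw [Finset.sum_const, Finset.card_range, nsmul_eq_mul]
  exact le_of_mul_le_mul_left hnorm (by positivity)

lemma ext_coeff_r {Y : Type*} [NormedAddCommGroup Y] [NormedSpace ℂ Y]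
    (n : ℕ) (c : ℕ → Y) (C R : ℝ) (hR : 0 < R)
    (h : ∀ z : ℂ, ‖z‖ = R → ‖∑ m ∈ Finset.range (n+1), z ^ m • c m‖ ≤ C) :
    ∀ m, m ≤ n → ‖c m‖ ≤ C / R ^ m := by
  intro m hm
  have key : ∀ m', ‖(fun m' => ((R : ℂ)) ^ m' • c m') m'‖ ≤ C → True := fun _ _ => trivial
  have h' : ∀ z : ℂ, ‖z‖ = 1 → ‖∑ m' ∈ Finset.range (n+1), z ^ m' • ((R : ℂ) ^ m' • c m')‖ ≤ C := by
    intro z hz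
    have : ∀ m', z ^ m' • ((R : ℂ) ^ m' • c m') = (z * R) ^ m' • c m' := by
      intro m'; rw [smul_smul, ← mul_pow]
    simp_rw [this]
    exact h (z * R) (by rw [norm_mul, hz, one_mul, Complex.norm_real, Real.norm_eq_abs,
      abs_of_pos hR])
  have := ext_coeff n _ C h' m hm
  rw [norm_smul, norm_pow, Complex.norm_real, Real.norm_eq_abs, abs_of_pos hR] at this
  rw [le_div_iff₀ (pow_pos hR m), mul_comm]
  exact this


lemma hom_expand {X Y : Type*} [NormedAddCommGroup X] [NormedSpace ℂ X]
    [NormedAddCommGroup Y] [NormedSpace ℂ Y]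
    (k : ℕ) (A : ContinuousMultilinearMap ℂ (fun _ : Fin k => X) Y) (c₀ d : X) (z : ℂ) :
    A (fun _ => c₀ + z • d) = ∑ m ∈ range (k+1), z ^ m •
      ∑ S ∈ Finset.univ.filter (fun S : Finset (Fin k) => S.card = m),
        A (S.piecewise (fun _ => d) (fun _ => c₀)) := by
  have e1 : (fun _ : Fin k => c₀ + z • d)
      = ((fun _ => z • d) + (fun _ => c₀) : Fin k → X) := by
    funext i; simp [add_comm]
  rw [e1, ← ContinuousMultilinearMap.coe_coe A]
  rw [A.toMultilinearMap.map_add_univ (fun _ => z • d) (fun _ => c₀)]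
  have e2 : ∀ S : Finset (Fin k),
      A.toMultilinearMap (S.piecewise (fun _ => z • d) (fun _ => c₀))
      = z ^ S.card • A.toMultilinearMap (S.piecewise (fun _ => d) (fun _ => c₀)) := by
    intro S
    have e3 : S.piecewise (fun _ => z • d) (fun _ => c₀)
        = S.piecewise (fun i => z • (S.piecewise (fun _ => d) (fun _ => c₀) i))
            (S.piecewise (fun _ => d) (fun _ => c₀)) := by
      funext i
      by_cases hi : i ∈ S
      · rw [Finset.piecewise_eq_of_mem _ _ _ hi, Finset.piecewise_eq_of_mem _ _ _ hi,
          Finset.piecewise_eq_of_mem _ _ _ hi]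
      · rw [Finset.piecewise_eq_of_notMem _ _ _ hi, Finset.piecewise_eq_of_notMem _ _ _ hi,
          Finset.piecewise_eq_of_notMem _ _ _ hi]
    rw [e3, A.toMultilinearMap.map_piecewise_smul (fun _ => z)
      (S.piecewise (fun _ => d) (fun _ => c₀)) S]
    simp [Finset.prod_const]
  simp_rw [e2]
  rw [← Finset.sum_fiberwise_of_maps_to (g := Finset.card) (t := range (k+1))
    (fun S _ => Finset.mem_range.mpr (Nat.lt_succ_of_le (by
      simpa using Finset.card_le_card (Finset.subset_univ S))))]
  · refine Finset.sum_congr rfl fun m _ => ?_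
    rw [Finset.smul_sum]
    refine Finset.sum_congr rfl fun S hS => ?_
    rw [(Finset.mem_filter.mp hS).2]

lemma hom_diff {X Y : Type*} [NormedAddCommGroup X] [NormedSpace ℂ X]
    [NormedAddCommGroup Y] [NormedSpace ℂ Y]
    (k : ℕ) (A : ContinuousMultilinearMap ℂ (fun _ : Fin k => X) Y)
    (Pk : X → Y) (hA : ∀ x, Pk x = A fun _ => x)
    (M ρ : ℝ) (hM : 0 ≤ M) (hρ0 : 0 < ρ) (hρ1 : ρ ≤ 1)
    (hbound : ∀ w : X, ‖w‖ < 2 → ‖Pk w‖ ≤ M)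
    (u v : X) (hu : ‖u‖ < 1) (hv : ‖v‖ < 1) (hd2 : ‖u - v‖ ≤ 2 * ρ) :
    ‖Pk u - Pk v‖ ≤ 2 * k * ρ * M := by
  set c₀ : X := (2⁻¹ : ℂ) • (u + v) with hc₀
  set d : X := (2⁻¹ : ℂ) • (u - v) with hdd
  have hdnorm : ‖d‖ ≤ ρ := by
    rw [hdd, norm_smul]
    have : ‖(2⁻¹ : ℂ)‖ = 2⁻¹ := by norm_num
    rw [this]
    linarith
  have hd1 : ‖d‖ ≤ 1 := hdnorm.trans hρ1
  have hc₀norm : ‖c₀‖ < 1 := by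
    rw [hc₀, norm_smul]
    have h2 : ‖(2⁻¹ : ℂ)‖ = 2⁻¹ := by norm_num
    have := norm_add_le u v
    rw [h2]
    linarith
  have hueq : u = c₀ + (1 : ℂ) • d := by
    rw [hc₀, hdd]; module
  have hveq : v = c₀ + (-1 : ℂ) • d := by
    rw [hc₀, hdd]; module
  by_cases hd0 : d = 0
  · have huv : u = v := by rw [hueq, hveq, hd0]; simp
    rw [huv, sub_self, norm_zero]
    positivity
  · have hdpos : 0 < ‖d‖ := norm_pos_iff.mpr hd0
    set b : ℕ → Y := fun m =>
      ∑ S ∈ Finset.univ.filter (fun S : Finset (Fin k) => S.card = m),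
        A (S.piecewise (fun _ => d) (fun _ => c₀)) with hb
    have hψ : ∀ z : ℂ, Pk (c₀ + z • d) = ∑ m ∈ range (k+1), z ^ m • b m := by
      intro z; rw [hA, hom_expand]
    have hcoeff : ∀ m, m ≤ k → ‖b m‖ ≤ M / (‖d‖⁻¹) ^ m := by
      refine ext_coeff_r k b M ‖d‖⁻¹ (by positivity) ?_
      intro z hz
      rw [← hψ]
      refine hbound _ ?_
      have hzd : ‖z • d‖ = 1 := by rw [norm_smul, hz, inv_mul_cancel₀ (ne_of_gt hdpos)]
      calc ‖c₀ + z • d‖ ≤ ‖c₀‖ + ‖z • d‖ := norm_add_le _ _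
        _ = ‖c₀‖ + 1 := by rw [hzd]
        _ < 2 := by linarith
    have hcoeff' : ∀ m, 1 ≤ m → m ≤ k → ‖b m‖ ≤ M * ρ := by
      intro m h1m hmk
      have := hcoeff m hmk
      rw [inv_pow, div_eq_mul_inv, inv_inv] at this
      refine this.trans ?_
      refine mul_le_mul_of_nonneg_left ?_ hM
      calc ‖d‖ ^ m ≤ ‖d‖ ^ 1 := pow_le_pow_of_le_one (norm_nonneg d) hd1 h1m
        _ = ‖d‖ := pow_one _
        _ ≤ ρ := hdnorm
    have hdiffeq : Pk u - Pk v = ∑ m ∈ range (k+1), ((1 : ℂ) ^ m - (-1 : ℂ) ^ m) • b m := by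
      rw [hueq, hveq, hψ, hψ, ← Finset.sum_sub_distrib]
      exact Finset.sum_congr rfl fun m _ => (sub_smul _ _ _).symm
    rw [hdiffeq]
    have hterm : ∀ m ∈ range (k+1), ‖((1 : ℂ) ^ m - (-1 : ℂ) ^ m) • b m‖
        ≤ (if m = 0 then 0 else 2 * (M * ρ)) := by
      intro m hmr
      by_cases hm0 : m = 0
      · subst hm0; simp
      · rw [if_neg hm0, norm_smul]
        have hsc : ‖(1 : ℂ) ^ m - (-1 : ℂ) ^ m‖ ≤ 2 := by
          calc ‖(1 : ℂ) ^ m - (-1 : ℂ) ^ m‖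
              ≤ ‖(1 : ℂ) ^ m‖ + ‖(-1 : ℂ) ^ m‖ := norm_sub_le _ _
            _ = 2 := by norm_num
        have hbb := hcoeff' m (by omega) (by have := Finset.mem_range.mp hmr; omega)
        exact mul_le_mul hsc hbb (norm_nonneg _) (by norm_num)
    calc ‖∑ m ∈ range (k+1), ((1 : ℂ) ^ m - (-1 : ℂ) ^ m) • b m‖
        ≤ ∑ m ∈ range (k+1), ‖((1 : ℂ) ^ m - (-1 : ℂ) ^ m) • b m‖ := norm_sum_le _ _
      _ ≤ ∑ m ∈ range (k+1), (if m = 0 then 0 else 2 * (M * ρ)) := Finset.sum_le_sum hterm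
      _ = (∑ _i ∈ range k, (2 * (M * ρ))) + 0 := by rw [Finset.sum_range_succ']; simp
      _ = 2 * k * ρ * M := by
          rw [add_zero, Finset.sum_const, Finset.card_range, nsmul_eq_mul]; ring

set_option maxHeartbeats 1000000 in
/-- with `T_{ρ,x}(y) = (1-ρ)y + ρ P_x(y)` for a norm-one projection `P_x`
onto `span ℂ {x}`, every polynomial `P` of degree at most `N` satisfies
`‖P(y) - P(T_{ρ,x}(y))‖ ≤ ρ ‖P‖_v M_N / 2` on the open unit ball. -/
theorem stmt14 {X Y : Type*} [NormedAddCommGroup X] [NormedSpace ℂ X] [CompleteSpace X]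
    [UniformConvexSpace X]
    [NormedAddCommGroup Y] [NormedSpace ℂ Y] [CompleteSpace Y]
    (N : ℕ) (hN : 1 ≤ N) (x : X) (hx : ‖x‖ < 1)
    (Px : X →L[ℂ] X) (hidem : ∀ y, Px (Px y) = Px y) (hPx1 : ‖Px‖ ≤ 1)
    (hrange : LinearMap.range (Px : X →ₗ[ℂ] X) = Submodule.span ℂ {x})
    (ρ : ℝ) (hρ0 : 0 < ρ) (hρ1 : ρ < 1)
    (P : X → Y) (hP : IsPolyDeg N P) :
    ∀ y : X, ‖y‖ < 1 →
      ‖P y - P ((((1 - ρ : ℝ) : ℂ)) • y + ((ρ : ℝ) : ℂ) • Px y)‖ ≤ ρ * vNorm P * MN N / 2 := by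
  intro y hy
  classical
  obtain ⟨Pk, hPk, hPsum⟩ := hP
  choose! A hA using hPk
  -- facts about s = sHalf N
  set s : ℝ := sHalf N with hsdef
  have hNpos : 0 < (N : ℝ) := by exact_mod_cast Nat.pos_of_ne_zero (by omega)
  set a : ℝ := (Nat.factorial N : ℝ) / (2 * (N : ℝ) ^ (N + 1)) with hadef
  have ha0 : 0 < a := by
    rw [hadef]
    have := Nat.factorial_pos N
    positivity
  have ha2 : a ≤ 1 / 2 := by
    rw [hadef, div_le_iff₀ (by positivity)]
    have h1 : (Nat.factorial N : ℝ) ≤ (N : ℝ) ^ N := by exact_mod_cast Nat.factorial_le_pow N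
    have h2 : (N : ℝ) ^ N ≤ (N : ℝ) ^ (N + 1) :=
      pow_le_pow_right₀ (by exact_mod_cast hN) (by omega)
    nlinarith
  have h1a0 : 0 < 1 - a := by linarith
  have hs0 : 0 < s := Real.rpow_pos_of_pos h1a0 _
  have hs1 : s < 1 := Real.rpow_lt_one h1a0.le (by linarith) (by positivity)
  have hsN : s ^ N = 1 - a := by
    rw [hsdef, sHalf, ← hadef, ← Real.rpow_natCast ((1 - a) ^ ((1 : ℝ) / N)) N,
      ← Real.rpow_mul h1a0.le, one_div, inv_mul_cancel₀ (ne_of_gt hNpos), Real.rpow_one]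
  have hs2 : 0 < 1 - s ^ 2 := by nlinarith
  have hskinv : ∀ k, k ≤ N → (1 : ℝ) / s ^ k ≤ 2 := by
    intro k hk
    have h1 : s ^ N ≤ s ^ k := pow_le_pow_of_le_one hs0.le hs1.le hk
    have h2 : (1 : ℝ) / 2 ≤ s ^ k := by rw [hsN] at h1; linarith
    rw [div_le_iff₀ (pow_pos hs0 k)]
    linarith
  -- homogeneity
  have hhom : ∀ k, k ≤ N → ∀ (z : ℂ) (w : X), Pk k (z • w) = z ^ k • Pk k w := by
    intro k hk z w
    rw [hA k hk, hA k hk]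
    have h := (A k).toMultilinearMap.map_smul_univ (fun _ => z) (fun _ => w)
    simpa [Finset.prod_const] using h
  -- global bound on the closed unit ball
  set CA : ℝ := ∑ k ∈ Finset.range (N + 1), ‖A k‖ with hCAdef
  have hball : ∀ z : X, ‖z‖ ≤ 1 → ‖P z‖ ≤ CA := by
    intro z hz
    rw [hPsum]
    refine (norm_sum_le _ _).trans (Finset.sum_le_sum fun k hk => ?_)
    have hkN : k ≤ N := by have := Finset.mem_range.mp hk; omega
    rw [hA k hkN z]
    refine ((A k).le_opNorm _).trans ?_
    have hp : ∏ _i : Fin k, ‖z‖ ≤ 1 :=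
      Finset.prod_le_one (fun _ _ => norm_nonneg z) (fun _ _ => hz)
    exact mul_le_of_le_one_right (norm_nonneg _) hp
  -- vNorm facts
  have hVbdd : BddAbove ((fun x : X => (1 - ‖x‖ ^ 2) * ‖P x‖) '' {x : X | ‖x‖ < 1}) := by
    refine ⟨CA, ?_⟩
    rintro r ⟨z, hz, rfl⟩
    simp only [Set.mem_setOf_eq] at hz
    have h1 : (1 - ‖z‖ ^ 2) ≤ 1 := by nlinarith [norm_nonneg z]
    have h0 : 0 ≤ 1 - ‖z‖ ^ 2 := by nlinarith [norm_nonneg z]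
    calc (1 - ‖z‖ ^ 2) * ‖P z‖ ≤ 1 * CA :=
          mul_le_mul h1 (hball z hz.le) (norm_nonneg _) one_pos.le
      _ = CA := one_mul _
  have hVle : ∀ z : X, ‖z‖ < 1 → (1 - ‖z‖ ^ 2) * ‖P z‖ ≤ vNorm P := by
    intro z hz
    exact le_csSup hVbdd ⟨z, hz, rfl⟩
  have hV0 : 0 ≤ vNorm P := by
    have h1 := hVle 0 (by simp)
    have h2 : 0 ≤ (1 - ‖(0 : X)‖ ^ 2) * ‖P 0‖ := by
      simp only [norm_zero]
      positivity
    linarith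
  -- sNorm facts
  have hSbdd : BddAbove ((fun x : X => ‖P ((s : ℂ) • x)‖) '' {x : X | ‖x‖ < 1}) := by
    refine ⟨CA, ?_⟩
    rintro r ⟨z, hz, rfl⟩
    simp only [Set.mem_setOf_eq] at hz
    refine hball _ ?_
    rw [norm_smul, Complex.norm_real, Real.norm_eq_abs, abs_of_pos hs0]
    nlinarith
  have hSle : ∀ z : X, ‖z‖ < 1 → ‖P ((s : ℂ) • z)‖ ≤ sNorm s P := by
    intro z hz
    exact le_csSup hSbdd ⟨z, hz, rfl⟩
  have hS0 : 0 ≤ sNorm s P := (norm_nonneg _).trans (hSle 0 (by simp))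
  have hSV : sNorm s P ≤ vNorm P / (1 - s ^ 2) := by
    rw [sNorm]
    refine Real.sSup_le ?_ (by positivity)
    rintro r ⟨z, hz, rfl⟩
    simp only [Set.mem_setOf_eq] at hz
    have hw : ‖(s : ℂ) • z‖ < s := by
      rw [norm_smul, Complex.norm_real, Real.norm_eq_abs, abs_of_pos hs0]
      nlinarith
    have hw1 : ‖(s : ℂ) • z‖ < 1 := hw.trans hs1
    have h1 := hVle _ hw1
    have h2 : 1 - s ^ 2 ≤ 1 - ‖(s : ℂ) • z‖ ^ 2 := by nlinarith [norm_nonneg ((s : ℂ) • z)]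
    have h3 : ‖P ((s : ℂ) • z)‖ * (1 - s ^ 2) ≤ ‖P ((s : ℂ) • z)‖ * (1 - ‖(s : ℂ) • z‖ ^ 2) :=
      mul_le_mul_of_nonneg_left h2 (norm_nonneg _)
    rw [le_div_iff₀ hs2]
    calc ‖P ((s : ℂ) • z)‖ * (1 - s ^ 2)
        ≤ ‖P ((s : ℂ) • z)‖ * (1 - ‖(s : ℂ) • z‖ ^ 2) := h3
      _ = (1 - ‖(s : ℂ) • z‖ ^ 2) * ‖P ((s : ℂ) • z)‖ := mul_comm _ _
      _ ≤ vNorm P := h1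
  -- component bound on the open unit ball
  have hcomp : ∀ k, k ≤ N → ∀ w : X, ‖w‖ < 1 → ‖Pk k w‖ ≤ 2 * sNorm s P := by
    intro k hk w hw
    have hext : ∀ z : ℂ, ‖z‖ = 1 →
        ‖∑ m ∈ Finset.range (N + 1), z ^ m • Pk m ((s : ℂ) • w)‖ ≤ sNorm s P := by
      intro z hz
      have key : P (z • ((s : ℂ) • w)) = ∑ m ∈ Finset.range (N + 1), z ^ m • Pk m ((s : ℂ) • w) := by
        rw [hPsum]
        refine Finset.sum_congr rfl fun m hm => ?_
        have hmN : m ≤ N := by have := Finset.mem_range.mp hm; omega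
        exact hhom m hmN z _
      rw [← key, smul_comm]
      refine hSle (z • w) ?_
      rw [norm_smul, hz, one_mul]; exact hw
    have h1 : ‖Pk k ((s : ℂ) • w)‖ ≤ sNorm s P :=
      ext_coeff N (fun m => Pk m ((s : ℂ) • w)) (sNorm s P) hext k hk
    have h2 : Pk k ((s : ℂ) • w) = (s : ℂ) ^ k • Pk k w := hhom k hk _ _
    rw [h2, norm_smul, norm_pow, Complex.norm_real, Real.norm_eq_abs, abs_of_pos hs0] at h1
    have h3 : ‖Pk k w‖ ≤ sNorm s P * (1 / s ^ k) := by
      rw [mul_one_div, le_div_iff₀ (pow_pos hs0 k), mul_comm]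
      exact h1
    calc ‖Pk k w‖ ≤ sNorm s P * (1 / s ^ k) := h3
      _ ≤ sNorm s P * 2 := mul_le_mul_of_nonneg_left (hskinv k hk) hS0
      _ = 2 * sNorm s P := mul_comm _ _
  -- component bound on the ball of radius 2
  have hcomp2 : ∀ k, k ≤ N → ∀ w : X, ‖w‖ < 2 → ‖Pk k w‖ ≤ 2 ^ k * (2 * sNorm s P) := by
    intro k hk w hw
    have hw2 : w = (2 : ℂ) • ((2⁻¹ : ℂ) • w) := by rw [smul_smul]; norm_num
    have hhalf : ‖(2⁻¹ : ℂ) • w‖ < 1 := by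
      rw [norm_smul]
      have : ‖(2⁻¹ : ℂ)‖ = 2⁻¹ := by norm_num
      rw [this]; linarith
    calc ‖Pk k w‖ = ‖(2 : ℂ) ^ k • Pk k ((2⁻¹ : ℂ) • w)‖ := by
          conv_lhs => rw [hw2, hhom k hk]
      _ = 2 ^ k * ‖Pk k ((2⁻¹ : ℂ) • w)‖ := by
          rw [norm_smul, norm_pow]
          norm_num
      _ ≤ 2 ^ k * (2 * sNorm s P) := by
          refine mul_le_mul_of_nonneg_left (hcomp k hk _ hhalf) (by positivity)
  -- the two points
  set v : X := (((1 - ρ : ℝ) : ℂ)) • y + ((ρ : ℝ) : ℂ) • Px y with hvdef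
  have hPxy : ‖Px y‖ ≤ ‖y‖ := by
    calc ‖Px y‖ ≤ ‖Px‖ * ‖y‖ := Px.le_opNorm y
      _ ≤ 1 * ‖y‖ := mul_le_mul_of_nonneg_right hPx1 (norm_nonneg y)
      _ = ‖y‖ := one_mul _
  have hvnorm : ‖v‖ < 1 := by
    have h1 : ‖(((1 - ρ : ℝ) : ℂ)) • y‖ = (1 - ρ) * ‖y‖ := by
      rw [norm_smul, Complex.norm_real, Real.norm_eq_abs, abs_of_pos (by linarith)]
    have h2 : ‖((ρ : ℝ) : ℂ) • Px y‖ = ρ * ‖Px y‖ := by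
      rw [norm_smul, Complex.norm_real, Real.norm_eq_abs, abs_of_pos hρ0]
    calc ‖v‖ ≤ ‖(((1 - ρ : ℝ) : ℂ)) • y‖ + ‖((ρ : ℝ) : ℂ) • Px y‖ := norm_add_le _ _
      _ = (1 - ρ) * ‖y‖ + ρ * ‖Px y‖ := by rw [h1, h2]
      _ ≤ (1 - ρ) * ‖y‖ + ρ * ‖y‖ := by nlinarith
      _ = ‖y‖ := by ring
      _ < 1 := hy
  have hyv : y - v = ((ρ : ℝ) : ℂ) • (y - Px y) := by
    rw [hvdef]
    have hc : ((1 - ρ : ℝ) : ℂ) = 1 - ((ρ : ℝ) : ℂ) := by push_cast; ring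
    rw [hc]
    module
  have hdiffnorm : ‖y - v‖ ≤ 2 * ρ := by
    rw [hyv, norm_smul, Complex.norm_real, Real.norm_eq_abs, abs_of_pos hρ0]
    have h1 : ‖y - Px y‖ ≤ 2 := by
      calc ‖y - Px y‖ ≤ ‖y‖ + ‖Px y‖ := norm_sub_le _ _
        _ ≤ 2 := by nlinarith
    nlinarith
  -- per-component difference
  have hdiff : ∀ k ∈ Finset.range (N + 1),
      ‖Pk k y - Pk k v‖ ≤ 2 * k * ρ * (2 ^ k * (2 * sNorm s P)) := by
    intro k hk
    have hkN : k ≤ N := by have := Finset.mem_range.mp hk; omega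
    exact hom_diff k (A k) (Pk k) (hA k hkN) _ ρ
      (by positivity) hρ0 hρ1.le (hcomp2 k hkN) y v hy hvnorm hdiffnorm
  -- sum comparison
  have hsums : ∑ k ∈ Finset.range (N + 1), (k : ℝ) * 2 ^ k
      ≤ ∑ n ∈ Finset.Icc 1 N, (2 : ℝ) ^ (2 * n - 1) * (n : ℝ) ^ n / (Nat.factorial n : ℝ) := by
    have hsub : Finset.Icc 1 N ⊆ Finset.range (N + 1) := by
      intro k hk
      simp only [Finset.mem_Icc] at hk
      exact Finset.mem_range.mpr (by omega)
    have hzero : ∀ k ∈ Finset.range (N + 1), k ∉ Finset.Icc 1 N → (k : ℝ) * 2 ^ k = 0 := by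
      intro k hk hnk
      have : k = 0 := by
        simp only [Finset.mem_Icc] at hnk
        have := Finset.mem_range.mp hk
        omega
      simp [this]
    rw [← Finset.sum_subset hsub hzero]
    refine Finset.sum_le_sum fun k hk => ?_
    have hk1 : 1 ≤ k := (Finset.mem_Icc.mp hk).1
    have hexp : 2 * k - 1 = k + (k - 1) := by omega
    have hfactpos : (0 : ℝ) < (Nat.factorial k : ℝ) := by exact_mod_cast Nat.factorial_pos k
    have hfact : (Nat.factorial k : ℝ) ≤ (k : ℝ) ^ k := by exact_mod_cast Nat.factorial_le_pow k
    have hratio : (1 : ℝ) ≤ (k : ℝ) ^ k / (Nat.factorial k : ℝ) := by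
      rw [le_div_iff₀ hfactpos, one_mul]; exact hfact
    have hk2 : (k : ℝ) ≤ 2 ^ (k - 1) := by
      have h1 : k - 1 < 2 ^ (k - 1) := Nat.lt_two_pow_self (n := k - 1)
      have h2 : k ≤ 2 ^ (k - 1) := by omega
      exact_mod_cast h2
    calc (k : ℝ) * 2 ^ k ≤ 2 ^ (k - 1) * 2 ^ k :=
          mul_le_mul_of_nonneg_right hk2 (by positivity)
      _ = 2 ^ (2 * k - 1) := by rw [← pow_add, hexp]; ring_nf
      _ = 2 ^ (2 * k - 1) * 1 := (mul_one _).symm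
      _ ≤ 2 ^ (2 * k - 1) * ((k : ℝ) ^ k / (Nat.factorial k : ℝ)) :=
          mul_le_mul_of_nonneg_left hratio (by positivity)
      _ = (2 : ℝ) ^ (2 * k - 1) * (k : ℝ) ^ k / (Nat.factorial k : ℝ) := by ring
  -- assembly
  have hsplit : P y - P v = ∑ k ∈ Finset.range (N + 1), (Pk k y - Pk k v) := by
    rw [hPsum y, hPsum v, Finset.sum_sub_distrib]
  have hSV2 : 2 * sNorm s P ≤ 2 * (vNorm P / (1 - s ^ 2)) := by linarith
  calc ‖P y - P v‖ ≤ ∑ k ∈ Finset.range (N + 1), ‖Pk k y - Pk k v‖ := by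
        rw [hsplit]; exact norm_sum_le _ _
    _ ≤ ∑ k ∈ Finset.range (N + 1), 2 * k * ρ * (2 ^ k * (2 * sNorm s P)) :=
        Finset.sum_le_sum hdiff
    _ ≤ ∑ k ∈ Finset.range (N + 1), ((k : ℝ) * 2 ^ k) * (4 * ρ * (vNorm P / (1 - s ^ 2))) := by
        refine Finset.sum_le_sum fun k hk => ?_
        have h1 : 2 * (k : ℝ) * ρ * (2 ^ k * (2 * sNorm s P))
            = ((k : ℝ) * 2 ^ k) * (4 * ρ * sNorm s P) := by ring
        have h2 : ((k : ℝ) * 2 ^ k) * (4 * ρ * sNorm s P)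
            ≤ ((k : ℝ) * 2 ^ k) * (4 * ρ * (vNorm P / (1 - s ^ 2))) := by
          refine mul_le_mul_of_nonneg_left ?_ (by positivity)
          nlinarith
        rw [h1]; exact h2
    _ = (∑ k ∈ Finset.range (N + 1), (k : ℝ) * 2 ^ k) * (4 * ρ * (vNorm P / (1 - s ^ 2))) :=
        (Finset.sum_mul _ _ _).symm
    _ ≤ (∑ n ∈ Finset.Icc 1 N, (2 : ℝ) ^ (2 * n - 1) * (n : ℝ) ^ n / (Nat.factorial n : ℝ))
          * (4 * ρ * (vNorm P / (1 - s ^ 2))) := by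
        refine mul_le_mul_of_nonneg_right hsums ?_
        positivity
    _ = ρ * vNorm P * MN N / 2 := by
        rw [MN, ← hsdef]
        field_simp
        ring
end

section
/- Let X be a uniformly convex complex Banach space, Y a complex Banach space, N ≥ 1, and 0 < ρ < 1/(16·M_N). Let R : X → Y be a polynomial of degree at most N with 1/2 ≤ ‖R‖_v ≤ 2, and let x ∈ B_X satisfy (1 − ‖x‖²)‖R(x)‖ ≥ ‖R‖_v − μ(ρ). Let P_x : X → X be a norm-one projection onto span_ℂ(x) and T_{ρ,x}(y) := (1 − ρ)y + ρP_x(y). Then for every polynomial S : X → Y of degree at most N with sup_{y ∈ B_X} ‖S(y) − R(T_{ρ,x}(y))‖ ≤ μ(ρ), and for every y ∈ B_X with dist(y, span_ℂ{x}) > ρ, one has (1 − ‖y‖²)‖S(y)‖ < ‖S‖_v − μ(ρ). -/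
open Filter Topology Metric

/-- The modulus of convexity `δ(t) = inf {1 - ‖(u+v)/2‖ : ‖u‖ ≤ 1, ‖v‖ ≤ 1, ‖u - v‖ ≥ t}`. -/
noncomputable def modConv (X : Type*) [NormedAddCommGroup X] (t : ℝ) : ℝ :=
  sInf ((fun p : X × X => 1 - ‖p.1 + p.2‖ / 2) ''
    {p : X × X | ‖p.1‖ ≤ 1 ∧ ‖p.2‖ ≤ 1 ∧ t ≤ ‖p.1 - p.2‖})

/-- `μ(ρ) = ρ² δ(2ρ²)² / 16`. -/
noncomputable def muConv (X : Type*) [NormedAddCommGroup X] (ρ : ℝ) : ℝ :=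
  ρ ^ 2 * modConv X (2 * ρ ^ 2) ^ 2 / 16

lemma poly_bound {X Y : Type*} [NormedAddCommGroup X] [NormedSpace ℂ X]
    [NormedAddCommGroup Y] [NormedSpace ℂ Y] {N : ℕ} {f : X → Y}
    (hf : IsPolyDeg N f) : ∃ C : ℝ, ∀ z : X, ‖z‖ < 1 → ‖f z‖ ≤ C := by
  obtain ⟨Pk, hPk, hsum⟩ := hf
  have hbk : ∀ k : ℕ, ∃ C : ℝ, k ≤ N → ∀ z : X, ‖z‖ ≤ 1 → ‖Pk k z‖ ≤ C := by
    intro k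
    by_cases hk : k ≤ N
    · obtain ⟨A, hA⟩ := hPk k hk
      refine ⟨‖A‖, fun _ z hz => ?_⟩
      rw [hA]
      calc ‖A fun _ => z‖ ≤ ‖A‖ * ∏ _i : Fin k, ‖z‖ := A.le_opNorm _
        _ ≤ ‖A‖ * 1 := by
            apply mul_le_mul_of_nonneg_left _ (norm_nonneg A)
            rw [Finset.prod_const]
            simpa using pow_le_one₀ (norm_nonneg z) hz
        _ = ‖A‖ := mul_one _
    · exact ⟨0, fun h => absurd h hk⟩
  choose C hC using hbk
  refine ⟨∑ k ∈ Finset.range (N + 1), C k, fun z hz => ?_⟩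
  rw [hsum]
  refine (norm_sum_le _ _).trans (Finset.sum_le_sum fun k hk => ?_)
  exact hC k (Nat.lt_succ_iff.mp (Finset.mem_range.mp hk)) z hz.le

lemma vset_bddAbove {X Y : Type*} [NormedAddCommGroup X] [NormedSpace ℂ X]
    [NormedAddCommGroup Y] [NormedSpace ℂ Y] {N : ℕ} {f : X → Y}
    (hf : IsPolyDeg N f) :
    BddAbove ((fun x => (1 - ‖x‖ ^ 2) * ‖f x‖) '' {x : X | ‖x‖ < 1}) := by
  obtain ⟨C, hC⟩ := poly_bound hf
  refine ⟨C, ?_⟩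
  rintro v ⟨z, hz, rfl⟩
  have h1 : ‖f z‖ ≤ C := hC z hz
  have h2 : (0:ℝ) ≤ ‖z‖ := norm_nonneg z
  have h3 : (0:ℝ) ≤ ‖f z‖ := norm_nonneg _
  simp only
  nlinarith

lemma MN_ge (N : ℕ) (hN : 1 ≤ N) : (16:ℝ) ≤ MN N := by
  have hN0 : (0:ℝ) < (N:ℝ) := by exact_mod_cast Nat.pos_of_ne_zero (by omega)
  set c : ℝ := (Nat.factorial N : ℝ) / (2 * (N : ℝ) ^ (N + 1)) with hc
  have hc0 : 0 < c := by
    apply div_pos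
    · exact_mod_cast Nat.factorial_pos N
    · positivity
  have hc12 : c ≤ 1 / 2 := by
    rw [hc, div_le_div_iff₀ (by positivity) (by norm_num)]
    have h1 : (Nat.factorial N : ℝ) ≤ (N:ℝ) ^ N := by
      exact_mod_cast Nat.factorial_le_pow N
    have h2 : (N:ℝ) ^ N ≤ (N:ℝ) ^ (N+1) := by
      apply pow_le_pow_right₀ _ (by omega)
      exact_mod_cast hN
    nlinarith [pow_pos hN0 (N+1)]
  have hb0 : (0:ℝ) ≤ 1 - c := by linarith
  have hb1 : 1 - c < 1 := by linarith
  have hs0 : 0 ≤ sHalf N := Real.rpow_nonneg hb0 _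
  have hs1 : sHalf N < 1 := by
    unfold sHalf
    rw [← hc]
    exact Real.rpow_lt_one hb0 hb1 (by positivity)
  have hinv : 1 ≤ (1 - sHalf N ^ 2)⁻¹ := by
    rw [le_inv_comm₀ (by norm_num) (by nlinarith)]
    nlinarith
  have hsum : (2:ℝ) ≤ ∑ n ∈ Finset.Icc 1 N,
      (2 : ℝ) ^ (2 * n - 1) * (n : ℝ) ^ n / (Nat.factorial n : ℝ) := by
    have hmem : 1 ∈ Finset.Icc 1 N := Finset.mem_Icc.mpr ⟨le_refl _, hN⟩
    have := Finset.single_le_sum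
      (f := fun n : ℕ => (2 : ℝ) ^ (2 * n - 1) * (n : ℝ) ^ n / (Nat.factorial n : ℝ))
      (fun n _ => by positivity) hmem
    simpa [Nat.factorial] using this
  unfold MN
  nlinarith

theorem modConv_bddBelow (X : Type*) [NormedAddCommGroup X] (t : ℝ) :
    BddBelow ((fun p : X × X => 1 - ‖p.1 + p.2‖ / 2) ''
      {p : X × X | ‖p.1‖ ≤ 1 ∧ ‖p.2‖ ≤ 1 ∧ t ≤ ‖p.1 - p.2‖}) := by
  refine ⟨0, ?_⟩
  rintro v ⟨p, ⟨h1, h2, _⟩, rfl⟩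
  have := norm_add_le p.1 p.2
  simp only
  linarith

set_option maxHeartbeats 1000000 in
/-- the key localization lemma. If `R` has `1/2 ≤ ‖R‖_v ≤ 2`, `x` almost
attains the `v`-norm of `R` up to `μ(ρ)`, and `S` is `μ(ρ)`-close to `R ∘ T_{ρ,x}` on the
ball, then `S` is far from attaining its `v`-norm outside `[x]_ρ`. -/
theorem stmt16 {X Y : Type*} [NormedAddCommGroup X] [NormedSpace ℂ X] [CompleteSpace X]
    [UniformConvexSpace X]
    [NormedAddCommGroup Y] [NormedSpace ℂ Y] [CompleteSpace Y]
    (N : ℕ) (hN : 1 ≤ N)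
    (ρ : ℝ) (hρ0 : 0 < ρ) (hρ1 : ρ < 1 / (16 * MN N))
    (R : X → Y) (hR : IsPolyDeg N R) (hRlow : 1 / 2 ≤ vNorm R) (hRhigh : vNorm R ≤ 2)
    (x : X) (hx : ‖x‖ < 1)
    (hxattain : (1 - ‖x‖ ^ 2) * ‖R x‖ ≥ vNorm R - muConv X ρ)
    (Px : X →L[ℂ] X) (hidem : ∀ y, Px (Px y) = Px y) (hPx1 : ‖Px‖ ≤ 1)
    (hrange : LinearMap.range (Px : X →ₗ[ℂ] X) = Submodule.span ℂ {x})
    (S : X → Y) (hS : IsPolyDeg N S)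
    (hSR : ∀ y : X, ‖y‖ < 1 →
      ‖S y - R ((((1 - ρ : ℝ) : ℂ)) • y + ((ρ : ℝ) : ℂ) • Px y)‖ ≤ muConv X ρ) :
    ∀ y : X, ‖y‖ < 1 →
      ρ < Metric.infDist y ((Submodule.span ℂ {x} : Submodule ℂ X) : Set X) →
      (1 - ‖y‖ ^ 2) * ‖S y‖ < vNorm S - muConv X ρ := by
  intro y hy hyd
  -- abbreviations
  set δ := modConv X ρ with hδdef
  set δ₂ := modConv X (2 * ρ ^ 2) with hδ₂def
  set μ := muConv X ρ with hμdef
  have hμeq : μ = ρ ^ 2 * δ₂ ^ 2 / 16 := rfl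
  -- ρ is small
  have hMN := MN_ge N hN
  have hρsmall : ρ < 1 / 256 := by
    refine hρ1.trans_le ?_
    rw [div_le_div_iff₀ (by linarith only [hMN]) (by norm_num)]
    linarith only [hMN]
  have hρhalf : ρ ≤ 1 / 2 := by linarith only [hρsmall, hρ0]
  -- y is far from 0
  have h0mem : (0:X) ∈ ((Submodule.span ℂ {x} : Submodule ℂ X) : Set X) :=
    Submodule.zero_mem _
  have hry : ρ < ‖y‖ := by
    have h := Metric.infDist_le_dist_of_mem h0mem (x := y)
    rw [dist_zero_right] at h
    linarith only [h, hyd]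
  have hr0 : (0:ℝ) < ‖y‖ := hρ0.trans hry
  have hy0 : y ≠ 0 := by
    intro h; rw [h, norm_zero] at hr0; exact lt_irrefl _ hr0
  set r := ‖y‖ with hrdef
  -- unit vector e and the companion v
  set e : X := ((r⁻¹ : ℝ) : ℂ) • y with hedef
  have he : ‖e‖ = 1 := by
    rw [hedef, norm_smul, Complex.norm_real, Real.norm_eq_abs,
      abs_of_pos (inv_pos.mpr hr0)]
    field_simp
    exact hrdef.symm
  -- Px facts
  have hPxx : Px x = x := by
    have hxmem : x ∈ LinearMap.range (Px : X →ₗ[ℂ] X) := by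
      rw [hrange]; exact Submodule.mem_span_singleton_self x
    obtain ⟨z, hz⟩ := hxmem
    change Px z = x at hz
    rw [← hz, hidem, hz]
  have hPy : ‖Px y‖ ≤ r := by
    calc ‖Px y‖ ≤ ‖Px‖ * ‖y‖ := Px.le_opNorm y
      _ ≤ 1 * ‖y‖ := by gcongr
      _ = r := one_mul r
  have hPymem : Px y ∈ ((Submodule.span ℂ {x} : Submodule ℂ X) : Set X) := by
    rw [← hrange]; exact ⟨y, rfl⟩
  have hdPy : ρ < ‖y - Px y‖ := by
    have h := Metric.infDist_le_dist_of_mem hPymem (x := y)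
    rw [dist_eq_norm] at h
    linarith only [h, hyd]
  -- modulus of convexity facts
  have hmemee : ((fun p : X × X => 1 - ‖p.1 + p.2‖ / 2) (e, -e)) ∈
      ((fun p : X × X => 1 - ‖p.1 + p.2‖ / 2) ''
        {p : X × X | ‖p.1‖ ≤ 1 ∧ ‖p.2‖ ≤ 1 ∧ (2 * ρ ^ 2) ≤ ‖p.1 - p.2‖}) := by
    refine ⟨(e, -e), ⟨he.le, by rw [norm_neg, he], ?_⟩, rfl⟩
    have : e - -e = (2:ℝ) • e := by
      rw [two_smul]; abel
    rw [this, norm_smul, Real.norm_eq_abs, he]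
    rw [abs_of_nonneg (by norm_num)]
    nlinarith only [hρhalf, hρ0]
  have hmemee' : ((fun p : X × X => 1 - ‖p.1 + p.2‖ / 2) (e, -e)) ∈
      ((fun p : X × X => 1 - ‖p.1 + p.2‖ / 2) ''
        {p : X × X | ‖p.1‖ ≤ 1 ∧ ‖p.2‖ ≤ 1 ∧ ρ ≤ ‖p.1 - p.2‖}) := by
    refine ⟨(e, -e), ⟨he.le, by rw [norm_neg, he], ?_⟩, rfl⟩
    have : e - -e = (2:ℝ) • e := by
      rw [two_smul]; abel
    rw [this, norm_smul, Real.norm_eq_abs, he]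
    rw [abs_of_nonneg (by norm_num)]
    nlinarith only [hρhalf, hρ0]
  have hδ₂0 : 0 ≤ δ₂ := by
    rw [hδ₂def]
    exact le_csInf ⟨_, hmemee⟩ (by
      rintro v ⟨p, ⟨h1, h2, _⟩, rfl⟩
      have := norm_add_le p.1 p.2
      simp only
      linarith only [this, h1, h2])
  have hδ1 : δ ≤ 1 := by
    rw [hδdef]
    refine (csInf_le (modConv_bddBelow X ρ) hmemee').trans ?_
    have := norm_nonneg (e + -e)
    simp only
    linarith only [this]
  have hδpos : 0 < δ := by
    obtain ⟨δ₀, hδ₀, H⟩ := exists_forall_closed_ball_dist_add_le_two_sub X hρ0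
    have : δ₀ / 2 ≤ δ := by
      rw [hδdef]
      refine le_csInf ⟨_, hmemee'⟩ ?_
      rintro v ⟨p, ⟨h1, h2, h3⟩, rfl⟩
      have := H h1 h2 h3
      simp only
      linarith only [this]
    linarith only [this, hδ₀]
  have hδ₂ρ : δ₂ ≤ ρ ^ 2 := by
    rw [hδ₂def]
    have hρ21 : 2 * ρ ^ 2 ≤ 1 := by nlinarith only [hρhalf, hρ0]
    refine csInf_le (modConv_bddBelow X _) ⟨(e, ((1 - 2 * ρ ^ 2 : ℝ) : ℂ) • e), ⟨he.le, ?_, ?_⟩, ?_⟩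
    · rw [norm_smul, Complex.norm_real, Real.norm_eq_abs, he, mul_one,
        abs_of_nonneg (by linarith only [hρ21])]
      linarith only [sq_nonneg ρ]
    · have hsub : e - ((1 - 2 * ρ ^ 2 : ℝ) : ℂ) • e = ((2 * ρ ^ 2 : ℝ) : ℂ) • e := by
        have h1 : e = ((1:ℝ):ℂ) • e := by norm_num
        nth_rewrite 1 [h1]
        rw [← sub_smul]
        norm_cast
        ring_nf
      rw [hsub, norm_smul, Complex.norm_real, Real.norm_eq_abs, he, mul_one,
        abs_of_nonneg (by positivity)]
    · have hadd : e + ((1 - 2 * ρ ^ 2 : ℝ) : ℂ) • e = ((2 - 2 * ρ ^ 2 : ℝ) : ℂ) • e := by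
        have h1 : e = ((1:ℝ):ℂ) • e := by norm_num
        nth_rewrite 1 [h1]
        rw [← add_smul]
        norm_cast
        ring_nf
      simp only
      rw [hadd, norm_smul, Complex.norm_real, Real.norm_eq_abs, he, mul_one,
        abs_of_nonneg (by linarith only [hρ21])]
      ring
  have hδ₂δ : δ₂ ≤ δ := by
    rw [hδ₂def, hδdef]
    refine csInf_le_csInf (modConv_bddBelow X _) ⟨_, hmemee'⟩ ?_
    rintro v ⟨p, ⟨h1, h2, h3⟩, rfl⟩
    refine ⟨p, ⟨h1, h2, ?_⟩, rfl⟩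
    have hρρ : 2 * ρ ^ 2 ≤ ρ := by nlinarith only [hρhalf, hρ0]
    linarith only [hρρ, h3]
  -- μ facts
  have hμ0 : 0 ≤ μ := by rw [hμeq]; positivity
  have h4μ : 4 * μ < ρ ^ 3 * δ := by
    rw [hμeq]
    have h1 : δ₂ ^ 2 ≤ ρ ^ 2 * δ := by
      calc δ₂ ^ 2 = δ₂ * δ₂ := pow_two δ₂
        _ ≤ ρ ^ 2 * δ := mul_le_mul hδ₂ρ hδ₂δ hδ₂0 (sq_nonneg ρ)
    linarith only [mul_le_mul_of_nonneg_left h1 (sq_nonneg ρ),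
      mul_pos (mul_pos (mul_pos hρ0 (mul_pos hρ0 hρ0)) hδpos)
        (show (0:ℝ) < 1 - ρ/4 by linarith only [hρsmall])]
  -- the midpoint estimate
  set v : X := ((r⁻¹ : ℝ) : ℂ) • Px y with hvdef
  have hv : ‖v‖ ≤ 1 := by
    rw [hvdef, norm_smul, Complex.norm_real, Real.norm_eq_abs,
      abs_of_pos (inv_pos.mpr hr0)]
    calc r⁻¹ * ‖Px y‖ ≤ r⁻¹ * r := by gcongr
      _ = 1 := inv_mul_cancel₀ (ne_of_gt hr0)
  have huv : ρ ≤ ‖e - v‖ := by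
    have hsub : e - v = ((r⁻¹ : ℝ) : ℂ) • (y - Px y) := by
      rw [hedef, hvdef, smul_sub]
    rw [hsub, norm_smul, Complex.norm_real, Real.norm_eq_abs,
      abs_of_pos (inv_pos.mpr hr0)]
    have hrinv : 1 ≤ r⁻¹ := by
      rw [le_inv_comm₀ one_pos hr0]; simpa using hy.le
    nlinarith only [hrinv, hdPy, norm_nonneg (y - Px y)]
  have hmid : δ ≤ 1 - ‖e + v‖ / 2 := by
    rw [hδdef]
    exact csInf_le (modConv_bddBelow X ρ) ⟨(e, v), ⟨he.le, hv, huv⟩, rfl⟩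
  have hyPy : ‖y + Px y‖ ≤ 2 * r * (1 - δ) := by
    have hsum : y + Px y = ((r : ℝ) : ℂ) • (e + v) := by
      rw [hedef, hvdef, smul_add, smul_smul, smul_smul]
      norm_cast
      rw [mul_inv_cancel₀ (ne_of_gt hr0)]
      simp
    rw [hsum, norm_smul, Complex.norm_real, Real.norm_eq_abs, abs_of_pos hr0]
    have h9 : ‖e + v‖ ≤ 2 * (1 - δ) := by linarith only [hmid]
    have := mul_le_mul_of_nonneg_left h9 hr0.le
    linarith only [this]
  -- the contracted point z
  set z : X := (((1 - ρ : ℝ) : ℂ)) • y + ((ρ : ℝ) : ℂ) • Px y with hzdef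
  have hzsplit : z = ((1 - 2 * ρ : ℝ) : ℂ) • y + ((ρ : ℝ) : ℂ) • (y + Px y) := by
    rw [hzdef, smul_add]
    rw [← add_assoc]
    congr 1
    rw [← add_smul]
    norm_cast
    ring_nf
  have hzn : ‖z‖ ≤ r * (1 - 2 * ρ * δ) := by
    rw [hzsplit]
    calc ‖((1 - 2 * ρ : ℝ) : ℂ) • y + ((ρ : ℝ) : ℂ) • (y + Px y)‖
        ≤ ‖((1 - 2 * ρ : ℝ) : ℂ) • y‖ + ‖((ρ : ℝ) : ℂ) • (y + Px y)‖ := norm_add_le _ _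
      _ = |1 - 2 * ρ| * r + |ρ| * ‖y + Px y‖ := by
          rw [norm_smul, norm_smul, Complex.norm_real, Complex.norm_real,
            Real.norm_eq_abs, Real.norm_eq_abs]
      _ ≤ (1 - 2 * ρ) * r + ρ * (2 * r * (1 - δ)) := by
          rw [abs_of_nonneg (by linarith only [hρhalf]), abs_of_pos hρ0]
          have := mul_le_mul_of_nonneg_left hyPy hρ0.le
          linarith only [this]
      _ = r * (1 - 2 * ρ * δ) := by ring
  have hzlt : ‖z‖ < 1 := by
    have h1 : 0 ≤ 2 * ρ * δ := by positivity
    have h2 : 2 * ρ * δ ≤ 1 := by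
      have := mul_le_mul hρhalf hδ1 hδpos.le (by norm_num : (0:ℝ) ≤ 1/2)
      linarith only [this]
    have h3 : r * (1 - 2 * ρ * δ) ≤ r * 1 :=
      mul_le_mul_of_nonneg_left (by linarith only [h1]) hr0.le
    linarith only [h2, h3, hzn, hy]
  -- gap between r² and ‖z‖²
  have hgap : r ^ 2 - ‖z‖ ^ 2 ≥ 2 * ρ ^ 3 * δ := by
    have h1 : ‖z‖ ^ 2 ≤ (r * (1 - 2 * ρ * δ)) ^ 2 := by
      have h5 := mul_self_le_mul_self (norm_nonneg z) hzn
      rw [pow_two, pow_two]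
      exact h5
    have hρδ : ρ * δ ≤ 1 / 2 := by
      have := mul_le_mul hρhalf hδ1 hδpos.le (by norm_num : (0:ℝ) ≤ 1/2)
      linarith only [this]
    have hr2 : ρ ^ 2 ≤ r ^ 2 := by
      have := mul_self_le_mul_self hρ0.le hry.le
      rw [pow_two, pow_two]
      linarith only [this]
    have e1 : r ^ 2 - (r * (1 - 2 * ρ * δ)) ^ 2
        = r ^ 2 * (4 * ρ * δ) - r ^ 2 * (4 * ρ ^ 2 * δ ^ 2) := by ring
    have e2 : r ^ 2 * (4 * ρ ^ 2 * δ ^ 2) ≤ r ^ 2 * (2 * ρ * δ) := by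
      apply mul_le_mul_of_nonneg_left _ (sq_nonneg r)
      linarith only [mul_le_mul_of_nonneg_right hρδ (mul_nonneg hρ0.le hδpos.le)]
    have e3 : ρ ^ 2 * (2 * ρ * δ) ≤ r ^ 2 * (2 * ρ * δ) :=
      mul_le_mul_of_nonneg_right hr2 (by positivity)
    linarith only [h1, e1, e2, e3]
  -- key estimates
  have hbddR := vset_bddAbove hR
  have hbddS := vset_bddAbove hS
  have hbV : (1 - ‖z‖ ^ 2) * ‖R z‖ ≤ vNorm R :=
    le_csSup hbddR ⟨z, hzlt, rfl⟩
  have key1 : (1 - r ^ 2) * ‖R z‖ ≤ vNorm R - ρ ^ 3 * δ := by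
    set A := ‖R z‖ with hA
    set b := 1 - ‖z‖ ^ 2 with hb
    have hzz := mul_self_lt_mul_self (norm_nonneg z) hzlt
    have hbpos : 0 < b := by rw [hb, pow_two]; linarith only [hzz]
    have hb1 : b ≤ 1 := by rw [hb]; linarith only [sq_nonneg ‖z‖]
    have hrr := mul_self_lt_mul_self hr0.le hy
    have ha0 : 0 ≤ 1 - r ^ 2 := by rw [pow_two]; linarith only [hrr]
    have hA0 : 0 ≤ A := norm_nonneg _
    have hab : 1 - r ^ 2 ≤ b - 2 * ρ ^ 3 * δ := by
      rw [hb]; linarith only [hgap]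
    have hV0 : (0:ℝ) ≤ vNorm R := by linarith only [hRlow]
    have hρδ0 : (0:ℝ) ≤ ρ ^ 3 * δ := by positivity
    have h1 : (1 - r ^ 2) * (b * A) ≤ (1 - r ^ 2) * vNorm R :=
      mul_le_mul_of_nonneg_left hbV ha0
    have h2 : (1 - r ^ 2) * vNorm R ≤ (b - 2 * ρ ^ 3 * δ) * vNorm R :=
      mul_le_mul_of_nonneg_right hab hV0
    have h3 : ρ ^ 3 * δ ≤ 2 * (ρ ^ 3 * δ) * vNorm R := by
      have := mul_nonneg hρδ0 (by linarith only [hRlow] : (0:ℝ) ≤ 2 * vNorm R - 1)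
      linarith only [this]
    have h5 : b * (ρ ^ 3 * δ) ≤ 1 * (ρ ^ 3 * δ) :=
      mul_le_mul_of_nonneg_right hb1 hρδ0
    have h4 : b * ((1 - r ^ 2) * A) ≤ b * (vNorm R - ρ ^ 3 * δ) := by
      calc b * ((1 - r ^ 2) * A) = (1 - r ^ 2) * (b * A) := by ring
        _ ≤ (1 - r ^ 2) * vNorm R := h1
        _ ≤ (b - 2 * ρ ^ 3 * δ) * vNorm R := h2
        _ = b * vNorm R - 2 * (ρ ^ 3 * δ) * vNorm R := by ring
        _ ≤ b * vNorm R - ρ ^ 3 * δ := by linarith only [h3]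
        _ ≤ b * (vNorm R - ρ ^ 3 * δ) := by
            have : b * (vNorm R - ρ ^ 3 * δ) = b * vNorm R - b * (ρ ^ 3 * δ) := by ring
            linarith only [this, h5]
    exact le_of_mul_le_mul_left h4 hbpos
  -- S is close to R ∘ T
  have hSy : ‖S y‖ ≤ ‖R z‖ + μ := by
    have h := hSR y hy
    have h2 := norm_add_le (S y - R z) (R z)
    rw [sub_add_cancel] at h2
    rw [← hzdef] at h
    linarith only [h, h2]
  -- lower bound on vNorm S
  have hTx : (((1 - ρ : ℝ) : ℂ)) • x + ((ρ : ℝ) : ℂ) • Px x = x := by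
    rw [hPxx, ← add_smul]
    norm_cast
    norm_num
  have hSx : ‖R x‖ - μ ≤ ‖S x‖ := by
    have h := hSR x hx
    rw [hTx] at h
    have h2 := norm_add_le (R x - S x) (S x)
    rw [sub_add_cancel] at h2
    rw [norm_sub_rev] at h
    linarith only [h, h2]
  have hVS : vNorm R - 2 * μ ≤ vNorm S := by
    have h1 : (1 - ‖x‖ ^ 2) * ‖S x‖ ≤ vNorm S := le_csSup hbddS ⟨x, hx, rfl⟩
    have h2 : 0 ≤ 1 - ‖x‖ ^ 2 := by
      have hxx := mul_self_lt_mul_self (norm_nonneg x) hx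
      rw [pow_two]
      linarith only [hxx]
    have h3 : (1 - ‖x‖ ^ 2) * (‖R x‖ - μ) ≤ (1 - ‖x‖ ^ 2) * ‖S x‖ :=
      mul_le_mul_of_nonneg_left hSx h2
    have h4 : 1 - ‖x‖ ^ 2 ≤ 1 := by linarith only [sq_nonneg ‖x‖]
    have h5 : (1 - ‖x‖ ^ 2) * μ ≤ μ := mul_le_of_le_one_left hμ0 h4
    have h6 : (1 - ‖x‖ ^ 2) * (‖R x‖ - μ)
        = (1 - ‖x‖ ^ 2) * ‖R x‖ - (1 - ‖x‖ ^ 2) * μ := by ring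
    linarith only [hxattain, h1, h3, h5, h6]
  -- conclude
  have hrr := mul_self_lt_mul_self hr0.le hy
  have ha0 : 0 ≤ 1 - r ^ 2 := by rw [pow_two]; linarith only [hrr]
  have ha1 : 1 - r ^ 2 ≤ 1 := by linarith only [sq_nonneg r]
  have hfin : (1 - r ^ 2) * ‖S y‖ ≤ (1 - r ^ 2) * ‖R z‖ + μ := by
    have h1 : (1 - r ^ 2) * ‖S y‖ ≤ (1 - r ^ 2) * (‖R z‖ + μ) :=
      mul_le_mul_of_nonneg_left hSy ha0
    have h2 : (1 - r ^ 2) * μ ≤ μ := mul_le_of_le_one_left hμ0 ha1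
    have h3 : (1 - r ^ 2) * (‖R z‖ + μ)
        = (1 - r ^ 2) * ‖R z‖ + (1 - r ^ 2) * μ := by ring
    linarith only [h1, h2, h3]
  calc (1 - ‖y‖ ^ 2) * ‖S y‖ ≤ (1 - r ^ 2) * ‖R z‖ + μ := hfin
    _ ≤ vNorm R - ρ ^ 3 * δ + μ := by linarith only [key1]
    _ < vNorm R - 2 * μ - μ := by linarith only [h4μ]
    _ ≤ vNorm S - μ := by linarith only [hVS]
end

section
/- Let X be a complex Banach space with the following property: for every finite-dimensional complex normed space F, every ε > 0, and every continuous linear operator T : X → F, there is a continuous linear projection P : X → X of finite rank with ‖P‖ ≤ 1 and ‖T − T∘P‖ ≤ ε. Then for every f : X → ℂ that is holomorphic on B_X and uniformly weakly continuous on the closed unit ball, and every ε > 0, there exists g : X → ℂ holomorphic on B_X and uniformly weakly continuous on the closed unit ball such that sup_{x ∈ B_X} |f(x) − g(x)| ≤ ε and g attains its s-norm for every s ∈ (0,1], i.e. for every s ∈ (0,1] there is x₀ with ‖x₀‖ ≤ s and |g(x₀)| = ‖g‖_s. -/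
open Filter Topology Metric

/-- `f` is uniformly weakly continuous on the closed unit ball. -/
def UnifWeaklyCts {X : Type*} [NormedAddCommGroup X] [NormedSpace ℂ X] (f : X → ℂ) : Prop :=
  ∀ ε : ℝ, 0 < ε → ∃ (m : ℕ) (φ : Fin m → (X →L[ℂ] ℂ)) (δ : ℝ), 0 < δ ∧
    ∀ x y : X, ‖x‖ ≤ 1 → ‖y‖ ≤ 1 →
      (∀ i : Fin m, ‖φ i x - φ i y‖ < δ) → ‖f x - f y‖ < ε


lemma uwc_cont {X : Type*} [NormedAddCommGroup X] [NormedSpace ℂ X] {f : X → ℂ}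
    (hwu : UnifWeaklyCts f) (x : X) (hx : ‖x‖ ≤ 1) {ε : ℝ} (hε : 0 < ε) :
    ∃ δ > 0, ∀ y : X, ‖y‖ ≤ 1 → ‖y - x‖ < δ → ‖f y - f x‖ < ε := by
  obtain ⟨m, φ, δ, hδ, h⟩ := hwu ε hε
  set C : ℝ := ∑ i, ‖φ i‖ with hC
  have hC0 : 0 ≤ C := Finset.sum_nonneg fun i _ => norm_nonneg _
  refine ⟨δ/(1+C), by positivity, fun y hy hyx => h y x hy hx fun i => ?_⟩
  have h1 : ‖φ i‖ ≤ C :=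
    Finset.single_le_sum (f := fun i => ‖φ i‖) (fun i _ => norm_nonneg _) (Finset.mem_univ i)
  calc ‖φ i y - φ i x‖ = ‖φ i (y - x)‖ := by rw [map_sub]
    _ ≤ ‖φ i‖ * ‖y - x‖ := (φ i).le_opNorm _
    _ ≤ (1+C) * ‖y - x‖ := by
        apply mul_le_mul_of_nonneg_right _ (norm_nonneg _); linarith
    _ < (1+C) * (δ/(1+C)) := by
        apply mul_lt_mul_of_pos_left hyx; positivity
    _ = δ := by field_simp

set_option maxHeartbeats 1000000

/-- if every operator into a finite-dimensional space is almost factored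
through a norm-one finite-rank projection, then holomorphic functions uniformly weakly
continuous on the closed ball can be approximated by such functions attaining every
`s`-norm, `s ∈ (0,1]`. -/
theorem stmt19 {X : Type*} [NormedAddCommGroup X] [NormedSpace ℂ X] [CompleteSpace X]
    (hX : ∀ (F : Type) [NormedAddCommGroup F] [NormedSpace ℂ F] [FiniteDimensional ℂ F],
      ∀ ε : ℝ, 0 < ε → ∀ T : X →L[ℂ] F,
        ∃ Pr : X →L[ℂ] X, (∀ z, Pr (Pr z) = Pr z) ∧
          FiniteDimensional ℂ (LinearMap.range (Pr : X →ₗ[ℂ] X)) ∧ ‖Pr‖ ≤ 1 ∧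
          ‖T - T.comp Pr‖ ≤ ε)
    (f : X → ℂ) (hf : DifferentiableOn ℂ f (Metric.ball (0 : X) 1))
    (hwu : UnifWeaklyCts f)
    (ε : ℝ) (hε : 0 < ε) :
    ∃ g : X → ℂ, DifferentiableOn ℂ g (Metric.ball (0 : X) 1) ∧
      UnifWeaklyCts g ∧
      (∀ x : X, ‖x‖ < 1 → ‖f x - g x‖ ≤ ε) ∧
      ∀ s : ℝ, 0 < s → s ≤ 1 → AttainsS s g := by
  
  classical
  obtain ⟨m, φ, δ, hδ, hfφ⟩ := hwu ε hε
  set T : X →L[ℂ] (Fin m → ℂ) := ContinuousLinearMap.pi φ with hT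
  obtain ⟨Pr, hproj, hFD, hPr1, hTP⟩ := hX (Fin m → ℂ) (δ/2) (by positivity) T
  have hPrle : ∀ x : X, ‖Pr x‖ ≤ ‖x‖ := by
    intro x
    calc ‖Pr x‖ ≤ ‖Pr‖ * ‖x‖ := Pr.le_opNorm x
      _ ≤ 1 * ‖x‖ := mul_le_mul_of_nonneg_right hPr1 (norm_nonneg x)
      _ = ‖x‖ := one_mul _
  refine ⟨f ∘ Pr, ?_, ?_, ?_, ?_⟩
  · exact hf.comp Pr.differentiable.differentiableOn (fun x hx => by
      rw [Metric.mem_ball, dist_zero_right] at *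
      exact lt_of_le_of_lt (hPrle x) hx)
  · intro ε' hε'
    obtain ⟨m', ψ, δ', hδ', h'⟩ := hwu ε' hε'
    exact ⟨m', fun i => (ψ i).comp Pr, δ', hδ', fun x y hx hy hclose =>
      h' (Pr x) (Pr y) ((hPrle x).trans hx) ((hPrle y).trans hy) (by simpa using hclose)⟩
  · intro x hx
    have hx1 : ‖x‖ ≤ 1 := hx.le
    have key : ∀ i : Fin m, ‖φ i x - φ i (Pr x)‖ < δ := by
      intro i
      have h1 : ‖T x - T (Pr x)‖ ≤ δ/2 * ‖x‖ := by
        have h2 := (T - T.comp Pr).le_opNorm x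
        simp only [ContinuousLinearMap.sub_apply, ContinuousLinearMap.comp_apply] at h2
        calc ‖T x - T (Pr x)‖ ≤ ‖T - T.comp Pr‖ * ‖x‖ := h2
          _ ≤ δ/2 * ‖x‖ := mul_le_mul_of_nonneg_right hTP (norm_nonneg x)
      have h3 : ‖(T x - T (Pr x)) i‖ ≤ ‖T x - T (Pr x)‖ := norm_le_pi_norm _ i
      have h4 : (T x - T (Pr x)) i = φ i x - φ i (Pr x) := by
        simp [hT, ContinuousLinearMap.pi_apply]
      rw [h4] at h3
      calc ‖φ i x - φ i (Pr x)‖ ≤ δ/2 * ‖x‖ := h3.trans h1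
        _ ≤ δ/2 * 1 := mul_le_mul_of_nonneg_left hx1 (by positivity)
        _ < δ := by linarith
    exact (hfφ x (Pr x) hx1 ((hPrle x).trans hx1) key).le
  · intro s hs hs1
    haveI : FiniteDimensional ℂ (LinearMap.range (Pr : X →ₗ[ℂ] X)) := hFD
    set F := LinearMap.range (Pr : X →ₗ[ℂ] X) with hFdef
    have hfix : ∀ y : F, Pr (y : X) = (y : X) := by
      rintro ⟨y, hy⟩
      obtain ⟨w, rfl⟩ := hy
      exact hproj w
    have hcoe : ∀ y : F, ‖(y : X)‖ = ‖y‖ := fun y => rfl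
    -- continuity of ‖f‖ on the closed ball of F
    have hFcont : ContinuousOn (fun y : F => ‖f (y : X)‖) (Metric.closedBall (0:F) s) := by
      intro y hy
      have hys : ‖y‖ ≤ s := by simpa [dist_zero_right] using Metric.mem_closedBall.mp hy
      have hy1 : ‖(y : X)‖ ≤ 1 := by rw [hcoe]; exact hys.trans hs1
      rw [Metric.continuousWithinAt_iff]
      intro ε' hε'
      obtain ⟨δ', hδ'0, hδ'⟩ := uwc_cont hwu (y : X) hy1 hε'
      refine ⟨δ', hδ'0, fun {z} hz hdz => ?_⟩
      have hzs : ‖z‖ ≤ s := by simpa [dist_zero_right] using Metric.mem_closedBall.mp hz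
      have hz1 : ‖(z : X)‖ ≤ 1 := by rw [hcoe]; exact hzs.trans hs1
      have hdz' : ‖(z : X) - (y : X)‖ < δ' := by
        rw [← Submodule.coe_sub, hcoe]; rwa [dist_eq_norm] at hdz
      have := hδ' (z : X) hz1 hdz'
      rw [Real.dist_eq]
      exact lt_of_le_of_lt (abs_norm_sub_norm_le _ _) this
    have hcp : IsCompact (Metric.closedBall (0:F) s) := by
      haveI : ProperSpace F := FiniteDimensional.proper ℂ F
      exact isCompact_closedBall _ _
    obtain ⟨y₀, hy₀mem, hy₀max⟩ := hcp.exists_isMaxOn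
      ⟨0, by simp [Metric.mem_closedBall, hs.le]⟩ hFcont
    have hy₀s : ‖(y₀ : X)‖ ≤ s := by
      rw [hcoe]; simpa [dist_zero_right] using Metric.mem_closedBall.mp hy₀mem
    have ub : ∀ a ∈ ((fun x => ‖(f ∘ Pr) ((s : ℂ) • x)‖) '' {x : X | ‖x‖ < 1}),
        a ≤ ‖f (y₀ : X)‖ := by
      rintro a ⟨x, hx, rfl⟩
      have hmem : Pr ((s : ℂ) • x) ∈ F := LinearMap.mem_range_self _ _
      have hyle : ‖Pr ((s : ℂ) • x)‖ ≤ s := by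
        calc ‖Pr ((s : ℂ) • x)‖ ≤ ‖(s : ℂ) • x‖ := hPrle _
          _ = |s| * ‖x‖ := by rw [norm_smul, Complex.norm_real, Real.norm_eq_abs]
          _ = s * ‖x‖ := by rw [abs_of_pos hs]
          _ ≤ s * 1 := mul_le_mul_of_nonneg_left hx.le hs.le
          _ = s := mul_one s
      have hball : (⟨Pr ((s : ℂ) • x), hmem⟩ : F) ∈ Metric.closedBall (0:F) s := by
        rw [Metric.mem_closedBall, dist_zero_right]
        exact hyle
      have h := hy₀max hball
      simpa using h
    set S := ((fun x => ‖(f ∘ Pr) ((s : ℂ) • x)‖) '' {x : X | ‖x‖ < 1}) with hS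
    have hne : S.Nonempty := ⟨_, ⟨0, by simp, rfl⟩⟩
    have hbdd : BddAbove S := ⟨_, ub⟩
    have hle : sSup S ≤ ‖f (y₀ : X)‖ := csSup_le hne ub
    have hge : ‖f (y₀ : X)‖ ≤ sSup S := by
      refine le_of_forall_pos_le_add ?_
      intro ε' hε'
      have hy₀1 : ‖(y₀ : X)‖ ≤ 1 := hy₀s.trans hs1
      obtain ⟨δ', hδ'0, hδ'⟩ := uwc_cont hwu ((y₀ : X)) hy₀1 hε'
      set N : ℝ := ‖(y₀ : X)‖ with hNdef
      have hN : (0:ℝ) ≤ N := norm_nonneg _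
      set t : ℝ := max (1/2) (1 - δ'/(2*(N+1))) with htdef
      have ht0 : 0 < t := lt_of_lt_of_le (by norm_num) (le_max_left _ _)
      have ht1 : t < 1 := by
        apply max_lt (by norm_num)
        have : 0 < δ'/(2*(N+1)) := by positivity
        linarith
      have h2 : (0:ℝ) < 2*(N+1) := by positivity
      have hkey : δ'/(2*(N+1)) * N < δ' := by
        rw [div_mul_eq_mul_div, div_lt_iff₀ h2]; nlinarith
      have h1t : 1 - t ≤ δ'/(2*(N+1)) := by
        have := le_max_right (1/2 : ℝ) (1 - δ'/(2*(N+1))); linarith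
      have htd : (1-t)*N < δ' :=
        lt_of_le_of_lt (mul_le_mul_of_nonneg_right h1t hN) hkey
      set z : X := ((t : ℝ) : ℂ) • (y₀ : X) with hzdef
      have hzn : ‖z‖ = t * N := by
        rw [hzdef, norm_smul, Complex.norm_real, Real.norm_eq_abs, abs_of_pos ht0, hNdef]
      have hz1 : ‖z‖ ≤ 1 := by rw [hzn]; nlinarith
      have hzy : ‖z - (y₀ : X)‖ < δ' := by
        have : z - (y₀ : X) = ((t - 1 : ℝ) : ℂ) • (y₀ : X) := by
          rw [hzdef]; push_cast; rw [sub_smul, one_smul]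
        rw [this, norm_smul, Complex.norm_real, Real.norm_eq_abs, abs_of_neg (by linarith : t - 1 < 0)]
        have : -(t-1) = 1 - t := by ring
        rw [this]; exact htd
      have hfz : ‖f z - f (y₀ : X)‖ < ε' := hδ' z hz1 hzy
      -- membership of ‖f z‖ in S
      set x : X := ((t/s : ℝ) : ℂ) • (y₀ : X) with hxdef
      have hxball : ‖x‖ < 1 := by
        rw [hxdef, norm_smul, Complex.norm_real, Real.norm_eq_abs, abs_of_pos (by positivity : 0 < t/s)]
        calc t/s * ‖(y₀ : X)‖ ≤ t/s * s := mul_le_mul_of_nonneg_left hy₀s (by positivity)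
          _ = t := div_mul_cancel₀ t hs.ne'
          _ < 1 := ht1
      have hsx : (s : ℂ) • x = z := by
        rw [hxdef, hzdef, smul_smul]
        congr 1
        have hsne : (s : ℂ) ≠ 0 := Complex.ofReal_ne_zero.mpr hs.ne'
        push_cast
        field_simp
      have hPz : Pr z = z := by
        rw [hzdef, map_smul, hfix y₀]
      have hmem : ‖f z‖ ∈ S := ⟨x, hxball, by simp only [Function.comp_apply, hsx, hPz]⟩
      have hfy : ‖f (y₀ : X)‖ ≤ ‖f z‖ + ε' := by
        have := abs_norm_sub_norm_le (f (y₀ : X)) (f z)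
        rw [norm_sub_rev] at hfz
        have h := le_of_lt (lt_of_le_of_lt (le_abs_self _) (lt_of_le_of_lt this hfz))
        linarith
      exact hfy.trans (add_le_add_left (le_csSup hbdd hmem) _)
    refine ⟨(y₀ : X), hy₀s, ?_⟩
    show ‖(f ∘ Pr) (y₀ : X)‖ = sNorm s (f ∘ Pr)
    have : (f ∘ Pr) (y₀ : X) = f (y₀ : X) := by simp [Function.comp_apply, hfix y₀]
    rw [this, sNorm, ← hS]
    exact (le_antisymm hle hge).symm
end
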